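/- arXiv:0909.3764 — 7 statements merged into one kernel-verified Lean document; each statement's English description precedes it below -/
import Mathlib

section
/- Let μ be a finite nonnegative measure on [0,1] and define ψ(λ) = ∫_{[0,1]} [λ]_x μ(dx) for λ > 0, where [λ]_x = (1 - x^λ)/(1 - x) for x ∈ [0,1) and [λ]_1 = λ. Then ψ(λ) = μ({0}) + μ({1})·λ + ∫_0^∞ (1 - e^{-λ y}) ω(dy), where ω is the push-forward of the measure (1-x)^{-1} μ(dx) 1_{0<x<1} under the map x ↦ -log x. In particular ω integrates y ↦ min(y,1). -/
/-!
On `(0,1)` the substitution `y = -log x` turns `x ^ λ` into `exp (-λ y)`, so there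
`[λ]_x = (1 - x)⁻¹ (1 - exp (-λ y))`, which is exactly the integrand against `ω`; the atoms
of `μ` at `0` and `1` contribute `[λ]_0 = 1` and `[λ]_1 = λ`. Since `μ` is finite, `ω`
integrates `min y 1` because `(1 - x)⁻¹ min (-log x) 1 ≤ 2` on `(0,1)`, by
`-log x ≤ (1 - x) / x`.
-/

open MeasureTheory

/-- The function `[λ]_x = (1 - x^λ)/(1 - x)` for `x ∈ [0,1)`, with `[λ]_1 = λ`. -/
noncomputable def lamBr (lam x : ℝ) : ℝ := if x = 1 then lam else (1 - x ^ lam) / (1 - x)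

open Set

lemma lamBr_zero {lam : ℝ} (hlam : lam ≠ 0) : lamBr lam 0 = 1 := by
  simp [lamBr, Real.zero_rpow hlam]

lemma lamBr_one (lam : ℝ) : lamBr lam 1 = lam := if_pos rfl

lemma lamBr_eq_of_mem_Ioo (lam : ℝ) {x : ℝ} (hx : x ∈ Ioo 0 1) :
    lamBr lam x = (1 - x)⁻¹ * (1 - Real.exp (-lam * -Real.log x)) := by
  rw [lamBr, if_neg hx.2.ne, neg_mul_neg, mul_comm lam, ← Real.rpow_def_of_pos hx.1,
    div_eq_inv_mul]

lemma measurable_lamBr (lam : ℝ) : Measurable (lamBr lam) :=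
  Measurable.ite (measurableSet_singleton 1) measurable_const
    ((measurable_const.sub (measurable_id.pow_const lam)).div (measurable_const.sub measurable_id))

lemma lamBr_nonneg {lam x : ℝ} (hlam : 0 ≤ lam) (hx : x ∈ Icc 0 1) : 0 ≤ lamBr lam x := by
  unfold lamBr
  split_ifs with h1
  · exact hlam
  · exact div_nonneg (sub_nonneg.2 (Real.rpow_le_one hx.1 hx.2 hlam))
      (sub_nonneg.2 hx.2)

lemma lamBr_le_max {lam x : ℝ} (hlam : 0 ≤ lam) (hx : x ∈ Icc 0 1) :
    lamBr lam x ≤ max 1 lam := by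
  unfold lamBr
  split_ifs with h1
  · exact le_max_right _ _
  have hpos : 0 < 1 - x := sub_pos.2 (lt_of_le_of_ne hx.2 h1)
  rw [div_le_iff₀ hpos]
  rcases le_total lam 1 with hl | hl
  · have : x ≤ x ^ lam := by
      simpa using Real.rpow_le_rpow_of_exponent_ge' hx.1 hx.2 hlam hl
    nlinarith [le_max_left 1 lam]
  · have : 1 + lam * (x - 1) ≤ x ^ lam := by
      simpa using one_add_mul_self_le_rpow_one_add (by linarith [hx.1] : (-1 : ℝ) ≤ x - 1) hl
    nlinarith [le_max_right 1 lam]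

lemma integrable_lamBr {μ : Measure ℝ} [IsFiniteMeasure μ] (hsupp : μ (Icc 0 1)ᶜ = 0)
    {lam : ℝ} (hlam : 0 ≤ lam) : Integrable (lamBr lam) μ := by
  refine (integrable_const (max 1 lam)).mono' (measurable_lamBr lam).aestronglyMeasurable ?_
  filter_upwards [mem_ae_iff.2 hsupp] with x hx
  rw [Real.norm_of_nonneg (lamBr_nonneg hlam hx)]
  exact lamBr_le_max hlam hx

lemma integral_eq_atoms_add_setIntegral_Ioo {a b : ℝ} (hab : a < b) {μ : Measure ℝ}
    (hsupp : μ (Icc a b)ᶜ = 0) {f : ℝ → ℝ} (hf : Integrable f μ) :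
    ∫ x, f x ∂μ = μ.real {a} * f a + μ.real {b} * f b + ∫ x in Ioo a b, f x ∂μ := by
  have hIcc : Icc a b = {a} ∪ ({b} ∪ Ioo a b) := by
    rw [← Ioc_insert_left hab.le, ← Ioo_insert_right hab, insert_eq, insert_eq]
  have ha : Disjoint {a} ({b} ∪ Ioo a b) := by simp [hab.ne]
  have hb : Disjoint {b} (Ioo a b) := by simp
  have hae : ∀ᵐ x ∂μ, x ∈ Icc a b := mem_ae_iff.2 hsupp
  calc ∫ x, f x ∂μ = ∫ x in Icc a b, f x ∂μ := by
        rw [Measure.restrict_eq_self_of_ae_mem hae]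
    _ = _ := by
      rw [hIcc, setIntegral_union ha ((measurableSet_singleton b).union measurableSet_Ioo)
          hf.integrableOn hf.integrableOn,
        setIntegral_union hb measurableSet_Ioo hf.integrableOn hf.integrableOn,
        integral_singleton, integral_singleton, smul_eq_mul, smul_eq_mul, add_assoc]

lemma measurable_ofReal_inv_one_sub : Measurable fun x : ℝ => ENNReal.ofReal (1 - x)⁻¹ := by
  fun_prop

lemma toReal_ofReal_inv_one_sub_of_mem_Ioo {x : ℝ} (hx : x ∈ Ioo 0 1) :
    (ENNReal.ofReal (1 - x)⁻¹).toReal = (1 - x)⁻¹ :=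
  ENNReal.toReal_ofReal (inv_nonneg.2 (sub_nonneg.2 hx.2.le))

lemma measurable_neg_log : Measurable fun x : ℝ => -Real.log x := by fun_prop

noncomputable def levyMeasure (μ : Measure ℝ) : Measure ℝ :=
  Measure.map (fun x => -Real.log x)
    ((μ.restrict (Ioo 0 1)).withDensity (fun x => ENNReal.ofReal (1 - x)⁻¹))

section levyMeasure

variable (μ : Measure ℝ)

lemma integral_levyMeasure {f : ℝ → ℝ} (hf : Measurable f) :
    ∫ y, f y ∂levyMeasure μ = ∫ x in Ioo 0 1, (1 - x)⁻¹ * f (-Real.log x) ∂μ := by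
  rw [levyMeasure, integral_map measurable_neg_log.aemeasurable hf.aestronglyMeasurable,
    integral_withDensity_eq_integral_toReal_smul measurable_ofReal_inv_one_sub
      (ae_of_all _ fun _ => ENNReal.ofReal_lt_top)]
  exact setIntegral_congr_fun measurableSet_Ioo fun x hx => by
    rw [toReal_ofReal_inv_one_sub_of_mem_Ioo hx, smul_eq_mul]

lemma integrable_levyMeasure_iff {f : ℝ → ℝ} (hf : Measurable f) :
    Integrable f (levyMeasure μ) ↔
      IntegrableOn (fun x => (1 - x)⁻¹ * f (-Real.log x)) (Ioo 0 1) μ := by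
  rw [levyMeasure, integrable_map_measure hf.aestronglyMeasurable
      measurable_neg_log.aemeasurable,
    integrable_withDensity_iff_integrable_smul' measurable_ofReal_inv_one_sub
      (ae_of_all _ fun _ => ENNReal.ofReal_lt_top)]
  refine integrable_congr ((ae_restrict_iff' measurableSet_Ioo).2 (ae_of_all _ fun x hx => ?_))
  simp only [Function.comp_apply, toReal_ofReal_inv_one_sub_of_mem_Ioo hx, smul_eq_mul]

lemma inv_one_sub_mul_min_neg_log_le_two {x : ℝ} (hx : x ∈ Ioo 0 1) :
    (1 - x)⁻¹ * min (-Real.log x) 1 ≤ 2 := by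
  have hpos : 0 < 1 - x := sub_pos.2 hx.2
  rw [inv_mul_le_iff₀ hpos]
  rcases le_total x (1 / 2) with hx2 | hx2
  · linarith [min_le_right (-Real.log x) 1]
  · have hlog := Real.one_sub_inv_le_log_of_pos hx.1
    have hinv : x⁻¹ ≤ 2 := by rw [inv_le_comm₀ hx.1 two_pos]; linarith
    nlinarith [min_le_left (-Real.log x) 1, mul_inv_cancel₀ hx.1.ne']

lemma integrable_min_one_levyMeasure [IsFiniteMeasure μ] :
    Integrable (fun y => min y 1) (levyMeasure μ) := by
  rw [integrable_levyMeasure_iff μ (by fun_prop : Measurable fun y : ℝ => min y 1)]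
  refine (integrableOn_const (C := 2)).mono' (by fun_prop)
    ((ae_restrict_iff' measurableSet_Ioo).2 (ae_of_all _ fun x hx => ?_))
  have hlog : 0 ≤ -Real.log x := neg_nonneg.2 (Real.log_nonpos hx.1.le hx.2.le)
  rw [Real.norm_of_nonneg (mul_nonneg (inv_nonneg.2 (sub_nonneg.2 hx.2.le))
    (le_min hlog zero_le_one))]
  exact inv_one_sub_mul_min_neg_log_le_two hx

end levyMeasure

lemma integral_lamBr_eq {μ : Measure ℝ} [IsFiniteMeasure μ] (hsupp : μ (Icc 0 1)ᶜ = 0)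
    {lam : ℝ} (hlam : 0 < lam) :
    ∫ x, lamBr lam x ∂μ
      = μ.real {0} + μ.real {1} * lam + ∫ y, (1 - Real.exp (-lam * y)) ∂levyMeasure μ := by
  rw [integral_eq_atoms_add_setIntegral_Ioo zero_lt_one hsupp (integrable_lamBr hsupp hlam.le),
    lamBr_zero hlam.ne', lamBr_one, mul_one, integral_levyMeasure μ (by fun_prop)]
  congr 1
  exact setIntegral_congr_fun measurableSet_Ioo fun x hx => lamBr_eq_of_mem_Ioo lam hx

theorem stmt3 (μ : Measure ℝ) [IsFiniteMeasure μ] (hsupp : μ (Set.Icc (0:ℝ) 1)ᶜ = 0)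
    (lam : ℝ) (hlam : 0 < lam) :
    (∫ x, lamBr lam x ∂μ
      = (μ {0}).toReal + (μ {1}).toReal * lam
        + ∫ y, (1 - Real.exp (-lam * y))
            ∂(Measure.map (fun x => -Real.log x)
              ((μ.restrict (Set.Ioo 0 1)).withDensity
                (fun x => ENNReal.ofReal (1 - x)⁻¹))))
    ∧ Integrable (fun y => min y 1)
        (Measure.map (fun x => -Real.log x)
          ((μ.restrict (Set.Ioo 0 1)).withDensity
            (fun x => ENNReal.ofReal (1 - x)⁻¹))) :=
  ⟨integral_lamBr_eq hsupp hlam, integrable_min_one_levyMeasure μ⟩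
end

section
/- Let f : [0,∞) → [0,1] be càdlàg and non-increasing, σ_f = inf{t : f(t) = 0}, γ > 0, τ_f(t) = ∫_0^t f(r)^{-γ} dr for t < σ_f (and τ_f(t) = ∞ for t ≥ σ_f), τ_f^{-1}(t) = inf{u ≥ 0 : τ_f(u) > t}, and g(t) = f(τ_f^{-1}(t)). Then τ_f^{-1}(t) = ∫_0^t g(r)^γ dr for all t ≥ 0, and in particular σ_f = ∫_0^∞ g(r)^γ dr. -/
open MeasureTheory
open scoped ENNReal

/-!
On `[0, σ)` the clock `τ v = ∫₀^v f^{-γ}` is continuous and strictly increasing (with slope at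
least `1`, since `f ≤ 1`), and right-continuity of `f` gives it the right derivative `f(v)^{-γ}`.
Its generalised inverse `τ⁻¹` inverts it there and is frozen at `σ` once `f (τ⁻¹ t) = 0`.
Hence `τ⁻¹` is `1`-Lipschitz with right derivative `f(τ⁻¹ t)^γ = g(t)^γ` at every `t ≥ 0`, which
is also the right derivative of `t ↦ ∫₀^t g^γ` because `g` is right-continuous. Both functions
vanish at `0`, so they coincide; letting `t → ∞`, `τ⁻¹ t ↑ σ`, which gives the second identity.
-/

open Filter Set Topology

theorem HasDerivWithinAt.of_local_left_inverse {𝕜 : Type*} [NontriviallyNormedField 𝕜]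
    {f g : 𝕜 → 𝕜} {f' a : 𝕜} {s t : Set 𝕜} (hg : Tendsto g (𝓝[s] a) (𝓝[t] (g a)))
    (hf : HasDerivWithinAt f f' t (g a)) (hf' : f' ≠ 0) (ha : a ∈ s)
    (hfg : ∀ᶠ y in 𝓝[s] a, f (g y) = y) : HasDerivWithinAt g f'⁻¹ s a :=
  HasFDerivWithinAt.of_local_left_inverse
    (f' := ContinuousLinearEquiv.unitsEquivAut 𝕜 (Units.mk0 f' hf')) hg hf ha hfg

theorem setLIntegral_Ioi_eq_iSup_Ioc_natCast (h : ℝ → ℝ≥0∞) (a : ℝ) :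
    ∫⁻ x in Ioi a, h x = ⨆ n : ℕ, ∫⁻ x in Ioc a n, h x := by
  have hunion : ⋃ n : ℕ, Ioc a n = Ioi a :=
    iUnion_Ioc_eq_Ioi_self_iff.2 fun x _ => exists_nat_ge x
  rw [← hunion, setLIntegral_iUnion_of_directed]
  exact Monotone.directed_le fun m n hmn => Ioc_subset_Ioc_right (Nat.cast_le.2 hmn)

namespace Lamperti

noncomputable def clock (f : ℝ → ℝ) (γ v : ℝ) : ℝ := ∫ r in (0:ℝ)..v, f r ^ (-γ)

/-- For `t ≥ 0` this is `{u ≥ 0 | t < τ u}`, where `τ u = ∞` once `f u = 0`. -/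
def clockInvSet (f : ℝ → ℝ) (γ t : ℝ) : Set ℝ := {u | 0 ≤ u ∧ (0 < f u → t < clock f γ u)}

noncomputable def clockInv (f : ℝ → ℝ) (γ t : ℝ) : ℝ := sInf (clockInvSet f γ t)

noncomputable def extinctionTime (f : ℝ → ℝ) : ℝ≥0∞ :=
  sInf (ENNReal.ofReal '' {t | 0 ≤ t ∧ f t = 0})

variable {f : ℝ → ℝ} {γ : ℝ}

theorem exists_gt_pos_of_rightContinuous {v : ℝ} (hrc : ContinuousWithinAt f (Ici v) v)
    (hfv : 0 < f v) : ∃ w, v < w ∧ 0 < f w := by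
  have h : ∀ᶠ x in 𝓝[>] v, 0 < f x :=
    (hrc.eventually (eventually_gt_nhds hfv)).filter_mono (nhdsWithin_mono _ Ioi_subset_Ici_self)
  obtain ⟨w, hw, hvw⟩ := (h.and self_mem_nhdsWithin).exists
  exact ⟨w, hvw, hw⟩

section Clock

variable {a b : ℝ}

theorem monotoneOn_rpow_neg (hmono : AntitoneOn f (Ici 0)) (hγ : 0 ≤ γ) (ha : 0 ≤ a)
    (hb : 0 < f b) : MonotoneOn (fun r => f r ^ (-γ)) (Icc a b) := by
  intro x hx y hy hxy
  have hfy : f b ≤ f y := hmono (ha.trans hy.1) (ha.trans (hy.1.trans hy.2)) hy.2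
  exact Real.rpow_le_rpow_of_nonpos (hb.trans_le hfy)
    (hmono (ha.trans hx.1) (ha.trans hy.1) hxy) (neg_nonpos.2 hγ)

theorem integrableOn_rpow_neg (hmono : AntitoneOn f (Ici 0)) (hγ : 0 ≤ γ) (ha : 0 ≤ a)
    (hb : 0 < f b) : IntegrableOn (fun r => f r ^ (-γ)) (Icc a b) :=
  (monotoneOn_rpow_neg hmono hγ ha hb).integrableOn_isCompact isCompact_Icc

theorem intervalIntegrable_rpow_neg (hmono : AntitoneOn f (Ici 0)) (hγ : 0 ≤ γ) (ha : 0 ≤ a)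
    (hab : a ≤ b) (hb : 0 < f b) : IntervalIntegrable (fun r => f r ^ (-γ)) volume a b :=
  (intervalIntegrable_iff_integrableOn_Icc_of_le hab).2 (integrableOn_rpow_neg hmono hγ ha hb)

theorem sub_le_clock_sub (hf1 : ∀ t, f t ≤ 1) (hmono : AntitoneOn f (Ici 0)) (hγ : 0 ≤ γ)
    (ha : 0 ≤ a) (hab : a ≤ b) (hb : 0 < f b) : b - a ≤ clock f γ b - clock f γ a := by
  rw [clock, clock, intervalIntegral.integral_interval_sub_left
    (intervalIntegrable_rpow_neg hmono hγ le_rfl (ha.trans hab) hb)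
    (intervalIntegrable_rpow_neg hmono hγ le_rfl ha
      (hb.trans_le (hmono ha (ha.trans hab) hab)))]
  calc b - a = ∫ _ in a..b, (1:ℝ) := by simp
    _ ≤ ∫ r in a..b, f r ^ (-γ) := by
      refine intervalIntegral.integral_mono_on hab intervalIntegrable_const
        (intervalIntegrable_rpow_neg hmono hγ ha hab hb) fun x hx => ?_
      exact Real.one_le_rpow_of_pos_of_le_one_of_nonpos
        (hb.trans_le (hmono (ha.trans hx.1) (ha.trans hab) hx.2)) (hf1 x) (neg_nonpos.2 hγ)

theorem continuousOn_clock (hmono : AntitoneOn f (Ici 0)) (hγ : 0 ≤ γ) (hb : 0 ≤ b)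
    (hfb : 0 < f b) : ContinuousOn (clock f γ) (Icc 0 b) := by
  rw [← uIcc_of_le hb]
  exact intervalIntegral.continuousOn_primitive_interval
    ((uIcc_of_le hb).symm ▸ integrableOn_rpow_neg hmono hγ le_rfl hfb)

theorem hasDerivWithinAt_clock (hmono : AntitoneOn f (Ici 0))
    (hrc : ContinuousWithinAt f (Ici b) b) (hγ : 0 ≤ γ) (hb : 0 ≤ b)
    (hfb : 0 < f b) : HasDerivWithinAt (clock f γ) (f b ^ (-γ)) (Ici b) b := by
  obtain ⟨w, hbw, hfw⟩ := exists_gt_pos_of_rightContinuous hrc hfb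
  refine intervalIntegral.integral_hasDerivWithinAt_right
    (intervalIntegrable_rpow_neg hmono hγ le_rfl hb hfb) (t := Ioi b) ?_ ?_
  · exact ⟨Ioo b w, Ioo_mem_nhdsGT hbw, ((integrableOn_rpow_neg hmono hγ hb hfw).mono_set
      Ioo_subset_Icc_self).aestronglyMeasurable⟩
  · exact (hrc.mono Ioi_subset_Ici_self).rpow_const (Or.inl hfb.ne')

end Clock

theorem ofReal_lt_extinctionTime_iff (hf0 : ∀ t, 0 ≤ f t) (hmono : AntitoneOn f (Ici 0))
    {v : ℝ} (hrc : ContinuousWithinAt f (Ici v) v) (hv : 0 ≤ v) :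
    ENNReal.ofReal v < extinctionTime f ↔ 0 < f v := by
  constructor
  · intro h
    exact (hf0 v).lt_of_ne fun h0 => h.not_ge (sInf_le ⟨v, ⟨hv, h0.symm⟩, rfl⟩)
  · intro hfv
    obtain ⟨w, hvw, hfw⟩ := exists_gt_pos_of_rightContinuous hrc hfv
    refine ((ENNReal.ofReal_lt_ofReal_iff_of_nonneg hv).2 hvw).trans_le (le_sInf ?_)
    rintro _ ⟨u, ⟨hu, hfu⟩, rfl⟩
    refine ENNReal.ofReal_le_ofReal (le_of_not_gt fun huw => ?_)
    exact (hfw.trans_le (hmono hu (hv.trans hvw.le) huw.le)).ne' hfu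

section ClockInv

variable {s t u v : ℝ}

@[simp]
theorem clock_zero : clock f γ 0 = 0 := intervalIntegral.integral_same

theorem bddBelow_clockInvSet : BddBelow (clockInvSet f γ t) :=
  ⟨0, fun _ hu => hu.1⟩

theorem clockInvSet_nonempty (hf1 : ∀ t, f t ≤ 1) (hmono : AntitoneOn f (Ici 0)) (hγ : 0 ≤ γ) :
    (clockInvSet f γ t).Nonempty := by
  have hu : 0 ≤ max t 0 + 1 := by positivity
  refine ⟨max t 0 + 1, hu, fun hfu => ?_⟩
  have := sub_le_clock_sub hf1 hmono hγ le_rfl hu hfu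
  rw [clock_zero] at this
  linarith [le_max_left t 0]

theorem clockInv_nonneg : 0 ≤ clockInv f γ t := Real.sInf_nonneg fun _ hu => hu.1

theorem clockInv_le (hf1 : ∀ t, f t ≤ 1) (hmono : AntitoneOn f (Ici 0)) (hγ : 0 ≤ γ)
    (hu : 0 ≤ u) (h : 0 < f u → t ≤ clock f γ u) : clockInv f γ t ≤ u := by
  refine le_of_forall_pos_le_add fun ε hε => ?_
  have huε : u ≤ u + ε := by linarith
  refine csInf_le bddBelow_clockInvSet ⟨hu.trans huε, fun hfuε => ?_⟩
  have hfu : 0 < f u := hfuε.trans_le (hmono hu (hu.trans huε) huε)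
  have := sub_le_clock_sub hf1 hmono hγ hu huε hfuε
  linarith [h hfu]

theorem le_clockInv (hf1 : ∀ t, f t ≤ 1) (hmono : AntitoneOn f (Ici 0)) (hγ : 0 ≤ γ)
    (hv : 0 ≤ v) (hfv : 0 < f v) (h : clock f γ v ≤ t) : v ≤ clockInv f γ t := by
  refine le_csInf (clockInvSet_nonempty hf1 hmono hγ) fun u ⟨hu, hut⟩ =>
    le_of_not_gt fun huv => ?_
  have hfu : 0 < f u := hfv.trans_le (hmono hu hv huv.le)
  have := sub_le_clock_sub hf1 hmono hγ hu huv.le hfv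
  linarith [hut hfu]

theorem clockInv_zero (hf1 : ∀ t, f t ≤ 1) (hmono : AntitoneOn f (Ici 0)) (hγ : 0 ≤ γ) :
    clockInv f γ 0 = 0 :=
  le_antisymm (clockInv_le hf1 hmono hγ le_rfl fun _ => clock_zero.ge) clockInv_nonneg

theorem monotone_clockInv (hf1 : ∀ t, f t ≤ 1) (hmono : AntitoneOn f (Ici 0)) (hγ : 0 ≤ γ) :
    Monotone (clockInv f γ) := fun _ _ hst =>
  csInf_le_csInf bddBelow_clockInvSet (clockInvSet_nonempty hf1 hmono hγ)
    fun _ ⟨hu, hut⟩ => ⟨hu, fun hfu => hst.trans_lt (hut hfu)⟩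

theorem clock_clockInv (hf1 : ∀ t, f t ≤ 1) (hmono : AntitoneOn f (Ici 0)) (hγ : 0 ≤ γ)
    (ht : 0 ≤ t) (hrc : ContinuousWithinAt f (Ici (clockInv f γ t)) (clockInv f γ t))
    (hpos : 0 < f (clockInv f γ t)) : clock f γ (clockInv f γ t) = t := by
  obtain ⟨w, hw, hfw⟩ := exists_gt_pos_of_rightContinuous hrc hpos
  have hw0 : 0 ≤ w := clockInv_nonneg.trans hw.le
  have htw : t ≤ clock f γ w :=
    le_of_not_gt fun h => hw.not_ge (le_clockInv hf1 hmono hγ hw0 hfw h.le)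
  obtain ⟨v, hv, hvt⟩ := intermediate_value_Icc hw0 (continuousOn_clock hmono hγ hw0 hfw)
    ⟨clock_zero.trans_le ht, htw⟩
  have hfv : 0 < f v := hfw.trans_le (hmono hv.1 hw0 hv.2)
  have hinv : clockInv f γ t = v := le_antisymm (clockInv_le hf1 hmono hγ hv.1 fun _ => hvt.ge)
    (le_clockInv hf1 hmono hγ hv.1 hfv hvt.le)
  rw [hinv, hvt]

theorem clockInv_le_add (hf1 : ∀ t, f t ≤ 1) (hmono : AntitoneOn f (Ici 0))
    (hrc : ∀ t ∈ Ici (0:ℝ), ContinuousWithinAt f (Ici t) t) (hγ : 0 ≤ γ) (hs : 0 ≤ s)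
    (hst : s ≤ t) : clockInv f γ t ≤ clockInv f γ s + (t - s) := by
  have hle : clockInv f γ s ≤ clockInv f γ s + (t - s) := by linarith
  refine clockInv_le hf1 hmono hγ (clockInv_nonneg.trans hle) fun hfu => ?_
  have hfs : 0 < f (clockInv f γ s) := hfu.trans_le (hmono clockInv_nonneg
    (clockInv_nonneg.trans hle) hle)
  have := sub_le_clock_sub hf1 hmono hγ clockInv_nonneg hle hfu
  rw [clock_clockInv hf1 hmono hγ hs (hrc _ clockInv_nonneg) hfs] at this
  linarith

theorem lipschitzOnWith_clockInv (hf1 : ∀ t, f t ≤ 1) (hmono : AntitoneOn f (Ici 0))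
    (hrc : ∀ t ∈ Ici (0:ℝ), ContinuousWithinAt f (Ici t) t) (hγ : 0 ≤ γ) :
    LipschitzOnWith 1 (clockInv f γ) (Ici 0) := by
  refine LipschitzOnWith.of_le_add fun x _ y hy => ?_
  rcases le_total x y with hxy | hyx
  · exact (monotone_clockInv hf1 hmono hγ hxy).trans (le_add_of_nonneg_right dist_nonneg)
  · rw [Real.dist_eq, abs_of_nonneg (sub_nonneg.2 hyx)]
    exact clockInv_le_add hf1 hmono hrc hγ hy hyx

theorem tendsto_clockInv_nhdsGE (hf1 : ∀ t, f t ≤ 1) (hmono : AntitoneOn f (Ici 0))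
    (hrc : ∀ t ∈ Ici (0:ℝ), ContinuousWithinAt f (Ici t) t) (hγ : 0 ≤ γ) (ht : 0 ≤ t) :
    Tendsto (clockInv f γ) (𝓝[≥] t) (𝓝[≥] (clockInv f γ t)) :=
  (((lipschitzOnWith_clockInv hf1 hmono hrc hγ).continuousOn t ht).mono
    (Ici_subset_Ici.2 ht)).tendsto_nhdsWithin fun _ hs => monotone_clockInv hf1 hmono hγ hs

theorem clockInv_eq_of_apply_eq_zero (hf1 : ∀ t, f t ≤ 1) (hmono : AntitoneOn f (Ici 0))
    (hγ : 0 ≤ γ) (hts : t ≤ s) (h0 : f (clockInv f γ t) = 0) :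
    clockInv f γ s = clockInv f γ t :=
  le_antisymm (clockInv_le hf1 hmono hγ clockInv_nonneg fun h => (h.ne' h0).elim)
    (monotone_clockInv hf1 hmono hγ hts)

theorem hasDerivWithinAt_clockInv (hf0 : ∀ t, 0 ≤ f t) (hf1 : ∀ t, f t ≤ 1)
    (hmono : AntitoneOn f (Ici 0)) (hrc : ∀ t ∈ Ici (0:ℝ), ContinuousWithinAt f (Ici t) t)
    (hγ : 0 < γ) (ht : 0 ≤ t) :
    HasDerivWithinAt (clockInv f γ) (f (clockInv f γ t) ^ γ) (Ici t) t := by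
  rcases (hf0 (clockInv f γ t)).eq_or_lt with h0 | hpos
  · rw [← h0, Real.zero_rpow hγ.ne']
    exact (hasDerivWithinAt_const t _ (clockInv f γ t)).congr_of_mem
      (fun s hs => clockInv_eq_of_apply_eq_zero hf1 hmono hγ.le hs h0.symm) self_mem_Ici
  have htendsto := tendsto_clockInv_nhdsGE hf1 hmono hrc hγ.le ht
  have hinv : ∀ᶠ s in 𝓝[≥] t, clock f γ (clockInv f γ s) = s := by
    filter_upwards [htendsto.eventually ((hrc _ clockInv_nonneg).eventually
      (eventually_gt_nhds hpos)), self_mem_nhdsWithin] with s hs hts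
    exact clock_clockInv hf1 hmono hγ.le (ht.trans hts) (hrc _ clockInv_nonneg) hs
  have := HasDerivWithinAt.of_local_left_inverse htendsto (hasDerivWithinAt_clock hmono
    (hrc _ clockInv_nonneg) hγ.le clockInv_nonneg hpos) (Real.rpow_pos_of_pos hpos _).ne'
    self_mem_Ici hinv
  rwa [Real.rpow_neg hpos.le, inv_inv] at this

theorem antitone_rpow_comp_clockInv (hf0 : ∀ t, 0 ≤ f t) (hf1 : ∀ t, f t ≤ 1)
    (hmono : AntitoneOn f (Ici 0)) (hγ : 0 ≤ γ) : Antitone fun r => f (clockInv f γ r) ^ γ :=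
  fun _ _ h => Real.rpow_le_rpow (hf0 _)
    (hmono clockInv_nonneg clockInv_nonneg (monotone_clockInv hf1 hmono hγ h)) hγ

theorem hasDerivWithinAt_integral_rpow_comp_clockInv (hf0 : ∀ t, 0 ≤ f t)
    (hf1 : ∀ t, f t ≤ 1) (hmono : AntitoneOn f (Ici 0))
    (hrc : ∀ t ∈ Ici (0:ℝ), ContinuousWithinAt f (Ici t) t) (hγ : 0 < γ) (ht : 0 ≤ t) :
    HasDerivWithinAt (fun s => ∫ r in (0:ℝ)..s, f (clockInv f γ r) ^ γ)
      (f (clockInv f γ t) ^ γ) (Ici t) t := by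
  have hanti := antitone_rpow_comp_clockInv hf0 hf1 hmono hγ.le
  have hcont : ContinuousWithinAt (fun r => f (clockInv f γ r)) (Ici t) t :=
    (hrc _ clockInv_nonneg).tendsto.comp (tendsto_clockInv_nhdsGE hf1 hmono hrc hγ.le ht)
  exact intervalIntegral.integral_hasDerivWithinAt_right hanti.intervalIntegrable
    hanti.measurable.aestronglyMeasurable.stronglyMeasurableAtFilter
    ((hcont.mono Ioi_subset_Ici_self).rpow_const (Or.inr hγ.le))

theorem clockInv_eq_integral (hf0 : ∀ t, 0 ≤ f t) (hf1 : ∀ t, f t ≤ 1)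
    (hmono : AntitoneOn f (Ici 0)) (hrc : ∀ t ∈ Ici (0:ℝ), ContinuousWithinAt f (Ici t) t)
    (hγ : 0 < γ) (ht : 0 ≤ t) :
    clockInv f γ t = ∫ r in (0:ℝ)..t, f (clockInv f γ r) ^ γ := by
  have hanti := antitone_rpow_comp_clockInv hf0 hf1 hmono hγ.le
  have hcont : ContinuousOn
      (fun s => clockInv f γ s - ∫ r in (0:ℝ)..s, f (clockInv f γ r) ^ γ) (Icc 0 t) :=
    ((lipschitzOnWith_clockInv hf1 hmono hrc hγ.le).continuousOn.mono Icc_subset_Ici_self).sub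
      (intervalIntegral.continuous_primitive (fun _ _ => hanti.intervalIntegrable) 0).continuousOn
  have hderiv : ∀ s ∈ Ico 0 t, HasDerivWithinAt
      (fun s => clockInv f γ s - ∫ r in (0:ℝ)..s, f (clockInv f γ r) ^ γ) 0 (Ici s) s :=
    fun s hs => by
      have h := (hasDerivWithinAt_clockInv hf0 hf1 hmono hrc hγ hs.1).sub
        (hasDerivWithinAt_integral_rpow_comp_clockInv hf0 hf1 hmono hrc hγ hs.1)
      rwa [sub_self] at h
  have := constant_of_has_deriv_right_zero hcont hderiv t (right_mem_Icc.2 ht)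
  rw [clockInv_zero hf1 hmono hγ.le, intervalIntegral.integral_same, sub_zero] at this
  exact sub_eq_zero.1 this

theorem ofReal_clockInv_le_extinctionTime (hf0 : ∀ t, 0 ≤ f t) (hf1 : ∀ t, f t ≤ 1)
    (hmono : AntitoneOn f (Ici 0)) (hrc : ∀ t ∈ Ici (0:ℝ), ContinuousWithinAt f (Ici t) t)
    (hγ : 0 ≤ γ) : ENNReal.ofReal (clockInv f γ t) ≤ extinctionTime f := by
  rcases eq_or_ne (extinctionTime f) ⊤ with htop | htop
  · exact htop ▸ le_top
  have hzero : f (extinctionTime f).toReal = 0 := by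
    have := (ofReal_lt_extinctionTime_iff hf0 hmono (hrc _ ENNReal.toReal_nonneg)
      ENNReal.toReal_nonneg).not.1
      (by rw [ENNReal.ofReal_toReal htop]; exact lt_irrefl _)
    exact le_antisymm (not_lt.1 this) (hf0 _)
  rw [← ENNReal.ofReal_toReal htop]
  exact ENNReal.ofReal_le_ofReal
    (clockInv_le hf1 hmono hγ ENNReal.toReal_nonneg fun h => (h.ne' hzero).elim)

theorem iSup_ofReal_clockInv_natCast (hf0 : ∀ t, 0 ≤ f t) (hf1 : ∀ t, f t ≤ 1)
    (hmono : AntitoneOn f (Ici 0)) (hrc : ∀ t ∈ Ici (0:ℝ), ContinuousWithinAt f (Ici t) t)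
    (hγ : 0 ≤ γ) : ⨆ n : ℕ, ENNReal.ofReal (clockInv f γ n) = extinctionTime f := by
  refine le_antisymm (iSup_le fun _ => ofReal_clockInv_le_extinctionTime hf0 hf1 hmono hrc hγ)
    (ENNReal.le_of_forall_nnreal_lt fun p hp => ?_)
  rw [← ENNReal.ofReal_coe_nnreal] at hp ⊢
  have hfp := (ofReal_lt_extinctionTime_iff hf0 hmono (hrc _ p.coe_nonneg) p.coe_nonneg).1 hp
  exact (ENNReal.ofReal_le_ofReal (le_clockInv hf1 hmono hγ p.coe_nonneg hfp
    (Nat.le_ceil _))).trans (le_iSup (fun n : ℕ => ENNReal.ofReal (clockInv f γ n)) _)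

theorem lintegral_rpow_comp_clockInv (hf0 : ∀ t, 0 ≤ f t) (hf1 : ∀ t, f t ≤ 1)
    (hmono : AntitoneOn f (Ici 0)) (hrc : ∀ t ∈ Ici (0:ℝ), ContinuousWithinAt f (Ici t) t)
    (hγ : 0 < γ) :
    ∫⁻ r in Ioi 0, ENNReal.ofReal (f (clockInv f γ r) ^ γ) = extinctionTime f := by
  have hanti := antitone_rpow_comp_clockInv hf0 hf1 hmono hγ.le
  rw [setLIntegral_Ioi_eq_iSup_Ioc_natCast, ← iSup_ofReal_clockInv_natCast hf0 hf1 hmono hrc hγ.le]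
  refine iSup_congr fun n => ?_
  have hn : (0:ℝ) ≤ n := n.cast_nonneg
  rw [clockInv_eq_integral hf0 hf1 hmono hrc hγ hn, intervalIntegral.integral_of_le hn,
    ofReal_integral_eq_lintegral_ofReal
      ((intervalIntegrable_iff_integrableOn_Ioc_of_le hn).1 hanti.intervalIntegrable)
      (Eventually.of_forall fun _ => Real.rpow_nonneg (hf0 _) _)]

end ClockInv

theorem sInf_ofReal_lt_eq_clockInv (hf0 : ∀ t, 0 ≤ f t) (hmono : AntitoneOn f (Ici 0))
    (hrc : ∀ t ∈ Ici (0:ℝ), ContinuousWithinAt f (Ici t) t) {τ : ℝ → ℝ≥0∞}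
    (hτ : ∀ u, τ u = if ENNReal.ofReal u < extinctionTime f
      then ENNReal.ofReal (clock f γ u) else ⊤) {t : ℝ} (ht : 0 ≤ t) :
    sInf {u | 0 ≤ u ∧ ENNReal.ofReal t < τ u} = clockInv f γ t := by
  refine congrArg sInf (ext fun u => and_congr_right fun hu => ?_)
  simp only [hτ, ofReal_lt_extinctionTime_iff hf0 hmono (hrc u hu) hu]
  split_ifs with hfu
  · simp [hfu, ENNReal.ofReal_lt_ofReal_iff_of_nonneg ht]
  · simp [hfu]

end Lamperti

open Lamperti

theorem stmt9 (f : ℝ → ℝ) (γ : ℝ) (hγ : 0 < γ)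
    (hf01 : ∀ t, f t ∈ Set.Icc (0:ℝ) 1)
    (hmono : AntitoneOn f (Set.Ici 0))
    (hrc : ∀ t ∈ Set.Ici (0:ℝ), ContinuousWithinAt f (Set.Ici t) t)
    (σ : ℝ≥0∞) (hσ : σ = sInf (ENNReal.ofReal '' {t : ℝ | 0 ≤ t ∧ f t = 0}))
    (τ : ℝ → ℝ≥0∞)
    (hτ : ∀ t : ℝ, τ t = if ENNReal.ofReal t < σ
        then ENNReal.ofReal (∫ r in (0:ℝ)..t, (f r) ^ (-γ)) else ⊤)
    (τinv : ℝ → ℝ)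
    (hτinv : ∀ t : ℝ, τinv t = sInf {u : ℝ | 0 ≤ u ∧ ENNReal.ofReal t < τ u})
    (g : ℝ → ℝ) (hg : ∀ t, g t = f (τinv t)) :
    (∀ t : ℝ, 0 ≤ t → τinv t = ∫ r in (0:ℝ)..t, (g r) ^ γ)
    ∧ σ = ∫⁻ r in Set.Ioi (0:ℝ), ENNReal.ofReal ((g r) ^ γ) := by
  subst hσ
  have hf0 : ∀ t, 0 ≤ f t := fun t => (hf01 t).1
  have hf1 : ∀ t, f t ≤ 1 := fun t => (hf01 t).2
  have hgγ : ∀ r, 0 ≤ r → g r ^ γ = f (clockInv f γ r) ^ γ := fun r hr => by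
    rw [hg, hτinv, sInf_ofReal_lt_eq_clockInv hf0 hmono hrc hτ hr]
  refine ⟨fun t ht => ?_, ?_⟩
  · rw [hτinv, sInf_ofReal_lt_eq_clockInv hf0 hmono hrc hτ ht,
      clockInv_eq_integral hf0 hf1 hmono hrc hγ ht]
    exact intervalIntegral.integral_congr fun r hr =>
      (hgγ r (by rw [uIcc_of_le ht] at hr; exact hr.1)).symm
  · rw [setLIntegral_congr_fun measurableSet_Ioi fun r hr => by rw [hgγ r (le_of_lt hr)]]
    exact (lintegral_rpow_comp_clockInv hf0 hf1 hmono hrc hγ).symm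
end

section
/- Let f_n, f be non-increasing nonnegative càdlàg functions on [0,∞) with f_n → f in the Skorokhod topology. Let ε > 0 be such that there is at most one x with f(x) = ε. Define t_{n,ε} = inf{t ≥ 0 : f_n(t) ≤ ε} and t_ε = inf{t ≥ 0 : f(t) ≤ ε} (possibly infinite). Then t_{n,ε} → t_ε as n → ∞. -/
open MeasureTheory Filter
open scoped ENNReal

/-- Pointwise convergence extracted from uniform-on-compacts convergence,
given a uniform (in `t`) upper bound for each `n`. -/
lemma stmt12_aux_ptwise (u : ℕ → ℝ → ℝ) {T s : ℝ} (hs : s ∈ Set.Icc (0:ℝ) T)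
    (hbdd : ∀ n, BddAbove (Set.range fun t : Set.Icc (0:ℝ) T => |u n (t : ℝ)|))
    (hsup : Tendsto (fun n => ⨆ t : Set.Icc (0:ℝ) T, |u n (t : ℝ)|) atTop (nhds 0)) :
    Tendsto (fun n => u n s) atTop (nhds 0) := by
  refine squeeze_zero_norm (fun n => ?_) hsup
  simpa [Real.norm_eq_abs] using le_ciSup (hbdd n) (⟨s, hs⟩ : Set.Icc (0:ℝ) T)

theorem stmt12 (f : ℕ → ℝ → ℝ) (f₀ : ℝ → ℝ)
    (hfn : ∀ n, AntitoneOn (f n) (Set.Ici 0) ∧ (∀ t, 0 ≤ t → 0 ≤ f n t)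
      ∧ ∀ t ∈ Set.Ici (0:ℝ), ContinuousWithinAt (f n) (Set.Ici t) t)
    (hf₀ : AntitoneOn f₀ (Set.Ici 0) ∧ (∀ t, 0 ≤ t → 0 ≤ f₀ t)
      ∧ ∀ t ∈ Set.Ici (0:ℝ), ContinuousWithinAt f₀ (Set.Ici t) t)
    -- Skorokhod convergence of `f n` to `f₀` on D[0,∞), encoded via time changes
    (lam : ℕ → ℝ → ℝ)
    (hlam : ∀ n, lam n 0 = 0 ∧ StrictMonoOn (lam n) (Set.Ici 0)
      ∧ ContinuousOn (lam n) (Set.Ici 0) ∧ Set.SurjOn (lam n) (Set.Ici 0) (Set.Ici 0))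
    (hlamconv : ∀ T > (0:ℝ),
      Tendsto (fun n => ⨆ t : Set.Icc (0:ℝ) T, |lam n (t : ℝ) - (t : ℝ)|) atTop (nhds 0))
    (hfconv : ∀ T > (0:ℝ),
      Tendsto (fun n => ⨆ t : Set.Icc (0:ℝ) T, |f n (lam n (t : ℝ)) - f₀ (t : ℝ)|)
        atTop (nhds 0))
    (ε : ℝ) (hε : 0 < ε)
    (huniq : Set.Subsingleton {x : ℝ | 0 ≤ x ∧ f₀ x = ε}) :
    Tendsto (fun n => sInf (ENNReal.ofReal '' {t : ℝ | 0 ≤ t ∧ f n t ≤ ε}))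
      atTop (nhds (sInf (ENNReal.ofReal '' {t : ℝ | 0 ≤ t ∧ f₀ t ≤ ε}))) := by
  -- basic facts about lam
  have hlam_nonneg : ∀ n s, 0 ≤ s → 0 ≤ lam n s := by
    intro n s hs
    have := (hlam n).2.1.monotoneOn (Set.self_mem_Ici) hs hs
    rw [(hlam n).1] at this
    exact this
  have hlam_mono : ∀ n, MonotoneOn (lam n) (Set.Ici 0) := fun n => (hlam n).2.1.monotoneOn
  -- pointwise convergence of lam n s → s
  have hlam_pt : ∀ s : ℝ, 0 ≤ s → Tendsto (fun n => lam n s) atTop (nhds s) := by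
    intro s hs
    have hT : (0:ℝ) < s + 1 := by linarith
    have hkey : Tendsto (fun n => lam n s - s) atTop (nhds 0) := by
      refine stmt12_aux_ptwise (fun n t => lam n t - t) ⟨hs, by linarith⟩ (fun n => ?_)
        (hlamconv (s+1) hT)
      refine ⟨lam n (s+1) + (s+1), ?_⟩
      rintro x ⟨⟨t, ht0, htT⟩, rfl⟩
      have h1 : 0 ≤ lam n t := hlam_nonneg n t ht0
      have h2 : lam n t ≤ lam n (s+1) := hlam_mono n ht0 hT.le htT
      simp only [abs_le]
      constructor <;> simp <;> nlinarith
    have := hkey.add_const s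
    simpa using this
  -- pointwise convergence of f n (lam n s) → f₀ s
  have hf_pt : ∀ s : ℝ, 0 ≤ s → Tendsto (fun n => f n (lam n s)) atTop (nhds (f₀ s)) := by
    intro s hs
    have hT : (0:ℝ) < s + 1 := by linarith
    have hkey : Tendsto (fun n => f n (lam n s) - f₀ s) atTop (nhds 0) := by
      refine stmt12_aux_ptwise (fun n t => f n (lam n t) - f₀ t) ⟨hs, by linarith⟩ (fun n => ?_)
        (hfconv (s+1) hT)
      refine ⟨f n 0 + f₀ 0, ?_⟩
      rintro x ⟨⟨t, ht0, htT⟩, rfl⟩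
      have h1 : 0 ≤ lam n t := hlam_nonneg n t ht0
      have h2 : 0 ≤ f n (lam n t) := (hfn n).2.1 _ h1
      have h3 : f n (lam n t) ≤ f n 0 := (hfn n).1 Set.self_mem_Ici h1 h1
      have h4 : 0 ≤ f₀ t := hf₀.2.1 t ht0
      have h5 : f₀ t ≤ f₀ 0 := hf₀.1 Set.self_mem_Ici ht0 ht0
      simp only [abs_le]
      constructor <;> nlinarith
    have := hkey.add_const (f₀ s)
    simpa using this
  -- facts about the limit hitting set
  have hbdd : BddBelow {t : ℝ | 0 ≤ t ∧ f₀ t ≤ ε} := ⟨0, fun x hx => hx.1⟩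
  have hc0 : {t : ℝ | 0 ≤ t ∧ f₀ t ≤ ε}.Nonempty → 0 ≤ sInf {t : ℝ | 0 ≤ t ∧ f₀ t ≤ ε} :=
    fun hne => le_csInf hne (fun x hx => hx.1)
  have habove : {t : ℝ | 0 ≤ t ∧ f₀ t ≤ ε}.Nonempty →
      ∀ t : ℝ, sInf {t : ℝ | 0 ≤ t ∧ f₀ t ≤ ε} < t → f₀ t ≤ ε := by
    intro hne t hct
    obtain ⟨u, hu, hut⟩ := (csInf_lt_iff hbdd hne).1 hct
    exact le_trans (hf₀.1 hu.1 (le_trans hu.1 hut.le) hut.le) hu.2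
  have hcS : {t : ℝ | 0 ≤ t ∧ f₀ t ≤ ε}.Nonempty →
      f₀ (sInf {t : ℝ | 0 ≤ t ∧ f₀ t ≤ ε}) ≤ ε := by
    intro hne
    have hcont : ContinuousWithinAt f₀ (Set.Ici (sInf {t : ℝ | 0 ≤ t ∧ f₀ t ≤ ε}))
        (sInf {t : ℝ | 0 ≤ t ∧ f₀ t ≤ ε}) := hf₀.2.2 _ (hc0 hne)
    have hcont' : Tendsto f₀ (nhdsWithin (sInf {t : ℝ | 0 ≤ t ∧ f₀ t ≤ ε})
        (Set.Ioi (sInf {t : ℝ | 0 ≤ t ∧ f₀ t ≤ ε}))) (nhds (f₀ (sInf {t : ℝ | 0 ≤ t ∧ f₀ t ≤ ε}))) :=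
      (hcont.mono Set.Ioi_subset_Ici_self).tendsto
    refine le_of_tendsto hcont' ?_
    filter_upwards [self_mem_nhdsWithin] with t ht
    exact habove hne t ht
  have hT0 : {t : ℝ | 0 ≤ t ∧ f₀ t ≤ ε}.Nonempty →
      sInf (ENNReal.ofReal '' {t : ℝ | 0 ≤ t ∧ f₀ t ≤ ε})
        = ENNReal.ofReal (sInf {t : ℝ | 0 ≤ t ∧ f₀ t ≤ ε}) := by
    intro hne
    refine le_antisymm (sInf_le ⟨_, ⟨hc0 hne, hcS hne⟩, rfl⟩) (le_sInf ?_)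
    rintro x ⟨t, ht, rfl⟩
    exact ENNReal.ofReal_le_ofReal (csInf_le hbdd ht)
  refine tendsto_order.2 ⟨?_, ?_⟩
  · -- lower bound
    intro a ha
    have haT : a ≠ ⊤ := ne_top_of_lt ha
    -- find s ≥ 0 with a.toReal < s and ε < f₀ s
    obtain ⟨s, hs0, has, hεs⟩ : ∃ s : ℝ, 0 ≤ s ∧ a.toReal < s ∧ ε < f₀ s := by
      by_cases hne : {t : ℝ | 0 ≤ t ∧ f₀ t ≤ ε}.Nonempty
      · rw [hT0 hne] at ha
        have hac : a.toReal < sInf {t : ℝ | 0 ≤ t ∧ f₀ t ≤ ε} :=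
          (ENNReal.lt_ofReal_iff_toReal_lt haT).1 ha
        refine ⟨(a.toReal + sInf {t : ℝ | 0 ≤ t ∧ f₀ t ≤ ε})/2, ?_, by linarith, ?_⟩
        · have := a.toReal_nonneg
          linarith
        · by_contra h
          push_neg at h
          have hmem : (a.toReal + sInf {t : ℝ | 0 ≤ t ∧ f₀ t ≤ ε})/2
              ∈ {t : ℝ | 0 ≤ t ∧ f₀ t ≤ ε} := ⟨by have := a.toReal_nonneg; linarith, h⟩
          have := csInf_le hbdd hmem
          linarith
      · refine ⟨a.toReal + 1, by have := a.toReal_nonneg; linarith, by linarith, ?_⟩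
        by_contra h
        push_neg at h
        exact hne ⟨a.toReal + 1, ⟨by have := a.toReal_nonneg; linarith, h⟩⟩
    have h1 : ∀ᶠ n in atTop, ε < f n (lam n s) := (hf_pt s hs0).eventually_const_lt hεs
    have h2 : ∀ᶠ n in atTop, a.toReal < lam n s := (hlam_pt s hs0).eventually_const_lt has
    filter_upwards [h1, h2] with n hn1 hn2
    refine lt_of_lt_of_le ((ENNReal.lt_ofReal_iff_toReal_lt haT).2 hn2) (le_sInf ?_)
    rintro x ⟨t, ⟨ht0, htf⟩, rfl⟩
    refine ENNReal.ofReal_le_ofReal ?_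
    by_contra h
    push_neg at h
    have := (hfn n).1 ht0 (hlam_nonneg n s hs0) h.le
    linarith
  · -- upper bound
    intro b hb
    have hne : {t : ℝ | 0 ≤ t ∧ f₀ t ≤ ε}.Nonempty := by
      by_contra h
      rw [Set.not_nonempty_iff_eq_empty] at h
      rw [h] at hb
      simp at hb
    rw [hT0 hne] at hb
    -- find B with sInf < B and ofReal B < b
    obtain ⟨B, hcB, hBb⟩ : ∃ B : ℝ, sInf {t : ℝ | 0 ≤ t ∧ f₀ t ≤ ε} < B
        ∧ ENNReal.ofReal B < b := by
      by_cases hbtop : b = ⊤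
      · exact ⟨sInf {t : ℝ | 0 ≤ t ∧ f₀ t ≤ ε} + 1, by linarith, by rw [hbtop]; exact ENNReal.ofReal_lt_top⟩
      · have hcb : sInf {t : ℝ | 0 ≤ t ∧ f₀ t ≤ ε} < b.toReal :=
          (ENNReal.ofReal_lt_iff_lt_toReal (hc0 hne) hbtop).1 hb
        refine ⟨(sInf {t : ℝ | 0 ≤ t ∧ f₀ t ≤ ε} + b.toReal)/2, by linarith, ?_⟩
        rw [ENNReal.ofReal_lt_iff_lt_toReal (by have := hc0 hne; linarith) hbtop]
        linarith
    -- find s ∈ (sInf, B) with f₀ s < ε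
    obtain ⟨s, hcs, hsB, hsε⟩ : ∃ s : ℝ, sInf {t : ℝ | 0 ≤ t ∧ f₀ t ≤ ε} < s
        ∧ s < B ∧ f₀ s < ε := by
      set c := sInf {t : ℝ | 0 ≤ t ∧ f₀ t ≤ ε} with hc
      have h₁ : c < c + (B - c)/3 := by linarith
      have h₂ : c < c + (B - c)*2/3 := by linarith
      rcases lt_or_eq_of_le (habove hne _ h₁) with h | h
      · exact ⟨c + (B - c)/3, h₁, by linarith, h⟩
      rcases lt_or_eq_of_le (habove hne _ h₂) with h' | h'
      · exact ⟨c + (B - c)*2/3, h₂, by linarith, h'⟩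
      exfalso
      have := huniq ⟨by have := hc0 hne; linarith, h⟩ ⟨by have := hc0 hne; linarith, h'⟩
      linarith
    have hs0 : 0 ≤ s := le_trans (hc0 hne) hcs.le
    have h1 : ∀ᶠ n in atTop, f n (lam n s) < ε := (hf_pt s hs0).eventually_lt_const hsε
    have h2 : ∀ᶠ n in atTop, lam n s < B := (hlam_pt s hs0).eventually_lt_const hsB
    filter_upwards [h1, h2] with n hn1 hn2
    refine lt_of_le_of_lt (sInf_le ⟨lam n s, ⟨hlam_nonneg n s hs0, hn1.le⟩, rfl⟩) ?_
    exact lt_of_le_of_lt (ENNReal.ofReal_le_ofReal hn2.le) hBb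
end

section
/- Let (q_k, k ≥ 0) be a probability distribution on the nonnegative integers with finite mean m = Σ_{k≥0} k·q_k. For 1 ≤ k ≤ n define the truncated step probabilities proportional to q on {0,...,n}, i.e. p_{n,n-j} = q_j/(1 - Σ_{i>n} q_i) for 0 ≤ j ≤ n. Then n·(1 - Σ_{k=0}^n p_{n,k} (k/n)^λ) → λ·m as n → ∞, for every λ > 0. -/
/-!
Reflecting the index `k ↦ n - k` and normalising by `S_n = ∑_{i ≤ n} q i`, the quantity equals
`S_n⁻¹ * ∑_{j ≤ n} q j * n (1 - (1 - j/n)^λ)`. Each term tends to `q j * λ j` (the derivative of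
`t ↦ t^λ` at `1`), and `0 ≤ n (1 - (1 - j/n)^λ) ≤ max 1 λ * j` (Bernoulli's inequality for
`λ ≥ 1`, `(1 - x)^λ ≥ 1 - x` for `λ ≤ 1`), so dominated convergence
against the summable sequence `j q j` gives the limit `λ m`, while `S_n → 1`.
-/

open Filter Topology Finset

theorem HasDerivAt.tendsto_nat_mul_sub_sub_div {f : ℝ → ℝ} {f' x : ℝ} (hf : HasDerivAt f f' x)
    (c : ℝ) : Tendsto (fun n : ℕ => (n : ℝ) * (f x - f (x - c / n))) atTop (𝓝 (c * f')) := by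
  rcases eq_or_ne c 0 with rfl | hc
  · simp
  have hstep : Tendsto (fun n : ℕ => -c / n) atTop (𝓝[≠] 0) := by
    refine tendsto_nhdsWithin_of_tendsto_nhds_of_eventually_within _
      (tendsto_const_div_atTop_nhds_zero_nat _) ?_
    filter_upwards [eventually_ne_atTop 0] with n hn
    simp [hc, hn]
  refine ((hf.tendsto_slope_zero.comp hstep).const_mul c).congr' ?_
  filter_upwards [eventually_ne_atTop 0] with n hn
  simp only [Function.comp_apply, smul_eq_mul]
  field_simp
  ring_nf

theorem tendsto_sum_range_succ_of_dominated {f : ℕ → ℕ → ℝ} {g bound : ℕ → ℝ}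
    (h_sum : Summable bound) (h_lim : ∀ j, Tendsto (f · j) atTop (𝓝 (g j)))
    (h_bound : ∀ n, ∀ j ≤ n, ‖f n j‖ ≤ bound j) :
    Tendsto (fun n => ∑ j ∈ range (n + 1), f n j) atTop (𝓝 (∑' j, g j)) := by
  have h_ind : ∀ j, Tendsto (fun n => (↑(range (n + 1)) : Set ℕ).indicator (f n) j) atTop
      (𝓝 (g j)) := fun j => (h_lim j).congr' <| by
    filter_upwards [eventually_ge_atTop j] with n hn
    simp [Set.indicator_of_mem, Nat.lt_succ_of_le hn]
  have h_ind_bound : ∀ n j, ‖(↑(range (n + 1)) : Set ℕ).indicator (f n) j‖ ≤ bound j := by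
    intro n j
    by_cases hj : j ≤ n
    · simpa [Nat.lt_succ_of_le hj] using h_bound n j hj
    · simpa [Set.indicator_of_notMem, hj] using (norm_nonneg _).trans (h_bound j j le_rfl)
  convert tendsto_tsum_of_dominated_convergence h_sum h_ind (Eventually.of_forall h_ind_bound)
    using 2 with n
  exact sum_eq_tsum_indicator _ _

theorem abs_one_sub_one_sub_rpow_le {x p : ℝ} (hx₀ : 0 ≤ x) (hx₁ : x ≤ 1) (hp : 0 < p) :
    |1 - (1 - x) ^ p| ≤ max 1 p * x := by
  rw [abs_of_nonneg (sub_nonneg.2 (Real.rpow_le_one (by linarith) (by linarith) hp.le))]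
  rcases le_total p 1 with hp₁ | hp₁
  · have hpow : (1 - x) ^ (1 : ℝ) ≤ (1 - x) ^ p :=
      Real.rpow_le_rpow_of_exponent_ge' (by linarith) (by linarith) hp.le hp₁
    rw [Real.rpow_one] at hpow
    nlinarith [le_max_left 1 p]
  · have hbernoulli := one_add_mul_self_le_rpow_one_add (s := -x) (by linarith) hp₁
    rw [← sub_eq_add_neg] at hbernoulli
    nlinarith [le_max_right 1 p]

theorem nat_mul_abs_one_sub_one_sub_div_rpow_le {p : ℝ} (hp : 0 < p) {n j : ℕ} (hj : j ≤ n) :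
    n * |1 - (1 - j / n : ℝ) ^ p| ≤ max 1 p * j := by
  rcases Nat.eq_zero_or_pos n with rfl | hn
  · simp [Nat.le_zero.1 hj]
  have hn' : (0 : ℝ) < n := by exact_mod_cast hn
  have hjn : (j / n : ℝ) ≤ 1 := by rw [div_le_one hn']; exact_mod_cast hj
  calc (n : ℝ) * |1 - (1 - j / n : ℝ) ^ p| ≤ n * (max 1 p * (j / n)) :=
        mul_le_mul_of_nonneg_left (abs_one_sub_one_sub_rpow_le (by positivity) hjn hp) hn'.le
    _ = max 1 p * j := by field_simp

theorem nat_mul_one_sub_sum_range_reflect (q : ℕ → ℝ) (g : ℝ → ℝ) {n : ℕ} (hn : n ≠ 0)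
    (hS : ∑ i ∈ range (n + 1), q i ≠ 0) :
    n * (1 - ∑ k ∈ range (n + 1), q (n - k) / (∑ i ∈ range (n + 1), q i) * g (k / n)) =
      (∑ i ∈ range (n + 1), q i)⁻¹ * ∑ j ∈ range (n + 1), q j * (n * (1 - g (1 - j / n))) := by
  set S := ∑ i ∈ range (n + 1), q i with hS_def
  have hreflect : ∑ k ∈ range (n + 1), q (n - k) / S * g (k / n) =
      ∑ j ∈ range (n + 1), q j / S * g (1 - j / n) := by
    rw [← sum_range_reflect]
    refine sum_congr rfl fun j hj => ?_
    have hj : j ≤ n := Nat.lt_succ_iff.1 (mem_range.1 hj)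
    rw [Nat.add_sub_cancel, Nat.sub_sub_self hj, Nat.cast_sub hj, sub_div, div_self (by simpa)]
  have hcancel : S * ∑ j ∈ range (n + 1), q j / S * g (1 - j / n) =
      ∑ j ∈ range (n + 1), q j * g (1 - j / n) := by
    rw [mul_sum]
    exact sum_congr rfl fun j _ => by field_simp
  rw [hreflect, eq_inv_mul_iff_mul_eq₀ hS]
  calc S * (n * (1 - ∑ j ∈ range (n + 1), q j / S * g (1 - j / n)))
      = n * S - n * (S * ∑ j ∈ range (n + 1), q j / S * g (1 - j / n)) := by ring
    _ = _ := by
      rw [hcancel, hS_def, mul_sum, mul_sum, ← sum_sub_distrib]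
      exact sum_congr rfl fun j _ => by ring

theorem tendsto_sum_range_mul_nat_mul_one_sub_one_sub_div_rpow {q : ℕ → ℝ} {m : ℝ}
    (hm : HasSum (fun k : ℕ => (k : ℝ) * q k) m) {p : ℝ} (hp : 0 < p) :
    Tendsto (fun n : ℕ => ∑ j ∈ range (n + 1), q j * (n * (1 - (1 - j / n : ℝ) ^ p)))
      atTop (𝓝 (p * m)) := by
  rw [← (hm.mul_left p).tsum_eq]
  refine tendsto_sum_range_succ_of_dominated (hm.summable.norm.mul_left (max 1 p))
    (fun j => ?_) (fun n j hj => ?_)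
  · have hderiv := HasDerivAt.tendsto_nat_mul_sub_sub_div
      (Real.hasDerivAt_rpow_const (p := p) (Or.inl one_ne_zero)) j
    simp only [Real.one_rpow, mul_one] at hderiv
    convert hderiv.const_mul (q j) using 2
    ring
  · simp only [norm_mul, Real.norm_eq_abs, Nat.abs_cast]
    calc |q j| * (n * |1 - (1 - j / n : ℝ) ^ p|) ≤ |q j| * (max 1 p * j) :=
          mul_le_mul_of_nonneg_left (nat_mul_abs_one_sub_one_sub_div_rpow_le hp hj) (abs_nonneg _)
      _ = max 1 p * (j * |q j|) := by ring

theorem stmt13_general (q : ℕ → ℝ)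
    (hsum : ∑' k, q k = 1)
    (m : ℝ) (hm : HasSum (fun k : ℕ => (k : ℝ) * q k) m)
    (lam : ℝ) (hlam : 0 < lam) :
    Tendsto (fun n : ℕ => (n : ℝ) *
        (1 - ∑ k ∈ Finset.range (n+1),
          q (n - k) / (∑ i ∈ Finset.range (n+1), q i) * ((k : ℝ) / n) ^ lam))
      atTop (nhds (lam * m)) := by
  have hq : HasSum q 1 := by
    have : Summable q := by
      by_contra h
      simp [tsum_eq_zero_of_not_summable h] at hsum
    exact hsum ▸ this.hasSum
  have hS : Tendsto (fun n => ∑ i ∈ range (n + 1), q i) atTop (𝓝 1) :=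
    hq.tendsto_sum_nat.comp (tendsto_add_atTop_nat 1)
  have hlim := (hS.inv₀ one_ne_zero).mul
    (tendsto_sum_range_mul_nat_mul_one_sub_one_sub_div_rpow hm hlam)
  rw [inv_one, one_mul] at hlim
  refine hlim.congr' ?_
  filter_upwards [hS.eventually_ne one_ne_zero, eventually_ne_atTop 0] with n hS0 hn
  exact (nat_mul_one_sub_sum_range_reflect q (· ^ lam) hn hS0).symm

theorem stmt13 (q : ℕ → ℝ) (hq : ∀ k, 0 ≤ q k) (hq0 : q 0 < 1)
    (hsum : ∑' k, q k = 1)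
    (m : ℝ) (hm : HasSum (fun k : ℕ => (k : ℝ) * q k) m)
    (lam : ℝ) (hlam : 0 < lam) :
    Tendsto (fun n : ℕ => (n : ℝ) *
        (1 - ∑ k ∈ Finset.range (n+1),
          q (n - k) / (∑ i ∈ Finset.range (n+1), q i) * ((k : ℝ) / n) ^ lam))
      atTop (nhds (lam * m)) :=
  stmt13_general q hsum m hm lam hlam
end

section
/- Let Λ be a finite measure on [0,1] with ∫_{[0,1]} x^{-1} Λ(dx) < ∞, and let g_{n,k} = C(n, k-1) ∫_{[0,1]} x^{n-k-1}(1-x)^{k-1} Λ(dx). Then for every λ ≥ 0, Σ_{k=1}^{n-1} g_{n,k} (1 - (k/n)^λ) → ∫_{[0,1]} (1 - (1-x)^λ) x^{-2} Λ(dx) as n → ∞. -/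
/-!
After reindexing and pulling the sum inside the integral, the `n`-th sum is `∫ F_n dΛ` with
`x² F_n(x) = ∑ₖ b_{n,k}(1 - x) φ((k + 1) / n)`, where `φ t = 1 - t ^ λ` and `b_{n,k}` are the
Bernstein basis polynomials: a Bernstein approximation of `φ` at `1 - x` whose nodes are shifted
by `1 / n`. Uniform continuity of `φ` gives `F_n(x) → φ(1 - x) / x²`, while
`φ t ≤ max 1 λ * (1 - t)` and the mean `∑ₖ (k / n) b_{n,k}(y) = y` give the bound
`F_n(x) ≤ max 1 λ / x`, which is integrable by hypothesis; dominated convergence concludes.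
-/

open MeasureTheory Filter Set unitInterval Topology

theorem one_sub_rpow_le_max_one_mul {lam t : ℝ} (ht₀ : 0 ≤ t) (ht₁ : t ≤ 1) :
    1 - t ^ lam ≤ max 1 lam * (1 - t) := by
  rcases le_total lam 1 with h | h
  · have := Real.self_le_rpow_of_le_one ht₀ ht₁ h
    nlinarith [le_max_left 1 lam]
  · have := one_add_mul_self_le_rpow_one_add (s := t - 1) (by linarith) h
    rw [add_sub_cancel] at this
    rw [max_eq_right h]
    linarith

theorem bernstein.mean {n : ℕ} (hn : n ≠ 0) (x : I) :
    ∑ k : Fin (n + 1), (bernstein.z k : ℝ) * bernstein n k x = x := by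
  have := congr(Polynomial.aeval (x : ℝ) $(bernsteinPolynomial.sum_smul ℝ n) / n)
  simp only [bernstein.z, bernstein_apply, nsmul_eq_mul, bernsteinPolynomial, Finset.sum_range,
    map_sum, Polynomial.coe_aeval_eq_eval, Polynomial.eval_mul, Polynomial.eval_pow,
    Polynomial.eval_sub, Polynomial.eval_natCast, Polynomial.eval_X, Polynomial.eval_one,
    Finset.sum_div] at this ⊢
  convert this using 1
  · refine Finset.sum_congr rfl fun k _ => ?_
    ring
  · field_simp

theorem tendsto_sum_bernstein_mul_of_dist_le (f : C(I, ℝ)) (x : I) {p : (n : ℕ) → Fin (n + 1) → I}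
    {δ : ℕ → ℝ} (hδ : Tendsto δ atTop (𝓝 0)) (hp : ∀ n k, dist (p n k) (bernstein.z k) ≤ δ n) :
    Tendsto (fun n => ∑ k : Fin (n + 1), bernstein n k x * f (p n k)) atTop (𝓝 (f x)) := by
  have hB : Tendsto (fun n => bernsteinApproximation n f x) atTop (𝓝 (f x)) :=
    ((continuous_eval_const x).tendsto f).comp (bernsteinApproximation_uniform f)
  suffices h : Tendsto (fun n => ∑ k : Fin (n + 1), bernstein n k x * f (p n k) -
      bernsteinApproximation n f x) atTop (𝓝 0) by
    simpa using h.add hB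
  rw [Metric.tendsto_nhds]
  intro ε hε
  obtain ⟨η, hη, hf⟩ := Metric.uniformContinuous_iff.1
    (CompactSpace.uniformContinuous_of_continuous f.continuous) (ε / 2) (half_pos hε)
  filter_upwards [(tendsto_order.1 hδ).2 η hη] with n hn
  have hdiff : |∑ k : Fin (n + 1), bernstein n k x * (f (p n k) - f (bernstein.z k))| ≤ ε / 2 :=
    calc |∑ k : Fin (n + 1), bernstein n k x * (f (p n k) - f (bernstein.z k))|
        ≤ ∑ k : Fin (n + 1), bernstein n k x * (ε / 2) := by
          refine (Finset.abs_sum_le_sum_abs _ _).trans (Finset.sum_le_sum fun k _ => ?_)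
          rw [abs_mul, abs_of_nonneg bernstein_nonneg, ← Real.dist_eq]
          exact mul_le_mul_of_nonneg_left (hf ((hp n k).trans_lt hn)).le bernstein_nonneg
      _ = ε / 2 := by rw [← Finset.sum_mul, bernstein.probability, one_mul]
  rw [Real.dist_eq, sub_zero, bernsteinApproximation.apply]
  simp only [smul_eq_mul, ← Finset.sum_sub_distrib, ← mul_sub]
  linarith

noncomputable def shiftedNode (n k : ℕ) : I := projIcc 0 1 zero_le_one ((k + 1) / n)

theorem bernstein.z_eq_projIcc {n : ℕ} (k : Fin (n + 1)) :
    bernstein.z k = projIcc 0 1 zero_le_one ((k : ℝ) / n) :=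
  (projIcc_val zero_le_one (bernstein.z k)).symm

theorem dist_shiftedNode_z_le {n : ℕ} (k : Fin (n + 1)) :
    dist (shiftedNode n k) (bernstein.z k) ≤ 1 / n := by
  rw [bernstein.z_eq_projIcc, Subtype.dist_eq, Real.dist_eq, shiftedNode]
  refine (abs_projIcc_sub_projIcc _).trans_eq ?_
  rw [← sub_div, add_sub_cancel_left, abs_of_nonneg (by positivity)]

theorem z_le_shiftedNode {n : ℕ} (k : Fin (n + 1)) : bernstein.z k ≤ shiftedNode n k := by
  rw [bernstein.z_eq_projIcc, shiftedNode]
  exact monotone_projIcc _ (div_le_div_of_nonneg_right (by linarith) n.cast_nonneg)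

noncomputable def collisionIntegrand (lam : ℝ) (n : ℕ) (x : ℝ) : ℝ :=
  ∑ k ∈ Finset.Icc 1 (n - 1),
    (n.choose (k - 1) : ℝ) * (x ^ (n - k - 1) * (1 - x) ^ (k - 1)) * (1 - ((k : ℝ) / n) ^ lam)

theorem setIntegral_collisionIntegrand (μ : Measure ℝ) [IsFiniteMeasure μ] (lam : ℝ) (n : ℕ) :
    ∫ x in Icc (0 : ℝ) 1, collisionIntegrand lam n x ∂μ =
      ∑ k ∈ Finset.Icc 1 (n - 1), (n.choose (k - 1) : ℝ) *
        (∫ x in Icc (0 : ℝ) 1, x ^ (n - k - 1) * (1 - x) ^ (k - 1) ∂μ) *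
        (1 - ((k : ℝ) / n) ^ lam) := by
  unfold collisionIntegrand
  rw [integral_finsetSum _ fun k _ => Continuous.integrableOn_Icc (by fun_prop)]
  simp only [integral_mul_const, integral_const_mul]

theorem sq_mul_collisionIntegrand (lam : ℝ) {n : ℕ} (hn : n ≠ 0) (x : I) :
    (x : ℝ) ^ 2 * collisionIntegrand lam n x =
      ∑ k : Fin (n + 1), bernstein n k (σ x) * (1 - (shiftedNode n k : ℝ) ^ lam) := by
  obtain ⟨m, rfl⟩ : ∃ m, n = m + 1 := ⟨n - 1, by omega⟩
  have hnode : ∀ k, m ≤ k → (shiftedNode (m + 1) k : ℝ) = 1 := fun k hk => by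
    rw [shiftedNode, projIcc_of_right_le]
    rw [le_div_iff₀ (by positivity), one_mul]
    push_cast
    exact_mod_cast (by omega : m + 1 ≤ k + 1)
  rw [Fin.sum_univ_eq_sum_range (fun k => bernstein (m + 1) k (σ x) *
    (1 - (shiftedNode (m + 1) k : ℝ) ^ lam)), Finset.sum_range_succ, Finset.sum_range_succ]
  -- the last two nodes are `1`, where `1 - t ^ lam` vanishes
  simp only [hnode m le_rfl, hnode (m + 1) (by omega), Real.one_rpow, sub_self, mul_zero, add_zero]
  rw [collisionIntegrand, Nat.add_sub_cancel, ← Finset.Ico_add_one_right_eq_Icc,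
    Finset.sum_Ico_eq_sum_range, Nat.add_sub_cancel, Finset.mul_sum]
  refine Finset.sum_congr rfl fun k hk => ?_
  rw [Finset.mem_range] at hk
  have hnode_k : (shiftedNode (m + 1) k : ℝ) = ((1 + k : ℕ) : ℝ) / (m + 1 : ℕ) := by
    rw [shiftedNode, projIcc_of_mem]
    · push_cast; ring
    · constructor
      · positivity
      · rw [div_le_one (by positivity)]; exact_mod_cast (by omega : k + 1 ≤ m + 1)
  rw [bernstein_apply, coe_symm_eq, hnode_k, sub_sub_cancel, Nat.add_sub_cancel_left,
    show m + 1 - (1 + k) - 1 = m - k - 1 by omega, show m + 1 - k = (m - k - 1) + 2 by omega,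
    pow_add]
  ring

theorem sum_bernstein_mul_one_sub_rpow_shiftedNode_le (lam : ℝ) {n : ℕ} (hn : n ≠ 0) (y : I) :
    ∑ k : Fin (n + 1), bernstein n k y * (1 - (shiftedNode n k : ℝ) ^ lam) ≤
      max 1 lam * (1 - y) := by
  calc ∑ k : Fin (n + 1), bernstein n k y * (1 - (shiftedNode n k : ℝ) ^ lam)
      ≤ ∑ k : Fin (n + 1), bernstein n k y * (max 1 lam * (1 - bernstein.z k)) := by
        refine Finset.sum_le_sum fun k _ => mul_le_mul_of_nonneg_left ?_ bernstein_nonneg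
        calc 1 - (shiftedNode n k : ℝ) ^ lam ≤ max 1 lam * (1 - shiftedNode n k) :=
              one_sub_rpow_le_max_one_mul (shiftedNode n k).2.1 (shiftedNode n k).2.2
          _ ≤ max 1 lam * (1 - bernstein.z k) := by
              gcongr
              exact z_le_shiftedNode k
    _ = max 1 lam * (∑ k : Fin (n + 1), bernstein n k y -
          ∑ k : Fin (n + 1), (bernstein.z k : ℝ) * bernstein n k y) := by
        rw [← Finset.sum_sub_distrib, Finset.mul_sum]
        exact Finset.sum_congr rfl fun k _ => by ring
    _ = max 1 lam * (1 - y) := by rw [bernstein.probability, bernstein.mean hn]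

theorem abs_collisionIntegrand_le {lam : ℝ} (hlam : 0 ≤ lam) {n : ℕ} (hn : n ≠ 0) (x : I)
    (hx : 0 < (x : ℝ)) : |collisionIntegrand lam n x| ≤ max 1 lam * (x : ℝ)⁻¹ := by
  have hsq := sq_mul_collisionIntegrand lam hn x
  have hnonneg : 0 ≤ (x : ℝ) ^ 2 * collisionIntegrand lam n x := by
    rw [hsq]
    refine Finset.sum_nonneg fun k _ => mul_nonneg bernstein_nonneg ?_
    exact sub_nonneg.2 (Real.rpow_le_one (shiftedNode n k).2.1 (shiftedNode n k).2.2 hlam)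
  have hle : (x : ℝ) ^ 2 * collisionIntegrand lam n x ≤ max 1 lam * x := by
    rw [hsq, ← sub_sub_cancel 1 (x : ℝ), ← coe_symm_eq]
    exact sum_bernstein_mul_one_sub_rpow_shiftedNode_le lam hn (σ x)
  have hx2 : 0 < (x : ℝ) ^ 2 := by positivity
  rw [abs_of_nonneg (nonneg_of_mul_nonneg_right (by linarith) hx2)]
  refine le_of_mul_le_mul_left (hle.trans_eq ?_) hx2
  field_simp

theorem tendsto_collisionIntegrand {lam : ℝ} (hlam : 0 ≤ lam) (x : I) (hx : (x : ℝ) ≠ 0) :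
    Tendsto (fun n => collisionIntegrand lam n x) atTop
      (𝓝 ((1 - (1 - (x : ℝ)) ^ lam) / (x : ℝ) ^ 2)) := by
  let f : C(I, ℝ) := ⟨fun t => 1 - (t : ℝ) ^ lam,
    continuous_const.sub ((Real.continuous_rpow_const hlam).comp continuous_subtype_val)⟩
  have hS := tendsto_sum_bernstein_mul_of_dist_le f (σ x) (p := fun n k => shiftedNode n k)
    tendsto_one_div_atTop_nhds_zero_nat fun n k => dist_shiftedNode_z_le k
  have hf : f (σ x) = 1 - (1 - (x : ℝ)) ^ lam := by simp [f, coe_symm_eq]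
  rw [← hf]
  refine (hS.div_const _).congr' ?_
  filter_upwards [eventually_ne_atTop 0] with n hn
  exact (eq_div_of_mul_eq (pow_ne_zero 2 hx)
    ((mul_comm _ _).trans (sq_mul_collisionIntegrand lam hn x))).symm

theorem measure_singleton_zero_eq_zero_of_lintegral_inv_ne_top {μ : Measure ℝ}
    (h : ∫⁻ x, (ENNReal.ofReal x)⁻¹ ∂μ ≠ ⊤) : μ {0} = 0 := by
  by_contra h0
  refine h (top_le_iff.1 ?_)
  calc ⊤ = ∫⁻ x in {(0 : ℝ)}, (ENNReal.ofReal x)⁻¹ ∂μ := by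
        rw [lintegral_singleton, ENNReal.ofReal_zero, ENNReal.inv_zero, ENNReal.top_mul h0]
    _ ≤ ∫⁻ x, (ENNReal.ofReal x)⁻¹ ∂μ := setLIntegral_le_lintegral _ _

theorem integrable_inv_of_lintegral_inv_ne_top {μ : Measure ℝ}
    (h : ∫⁻ x, (ENNReal.ofReal x)⁻¹ ∂μ ≠ ⊤) : Integrable (fun x : ℝ => x⁻¹) μ := by
  refine ⟨measurable_inv.aestronglyMeasurable, (lintegral_mono fun x => ?_).trans_lt h.lt_top⟩
  rcases le_or_gt x 0 with hx | hx
  · simp [ENNReal.ofReal_of_nonpos hx]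
  · rw [Real.enorm_of_nonneg (inv_nonneg.2 hx.le), ENNReal.ofReal_inv_of_pos hx]

theorem stmt17_general (Λ : Measure ℝ) [IsFiniteMeasure Λ]
    (hint : ∫⁻ x in Set.Icc (0:ℝ) 1, (ENNReal.ofReal x)⁻¹ ∂Λ ≠ ⊤)
    (lam : ℝ) (hlam : 0 ≤ lam) :
    Tendsto (fun n : ℕ =>
        ∑ k ∈ Finset.Icc 1 (n-1), (n.choose (k-1) : ℝ) *
          (∫ x in Set.Icc (0:ℝ) 1, x ^ (n - k - 1) * (1 - x) ^ (k - 1) ∂Λ) *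
          (1 - ((k : ℝ) / n) ^ lam))
      atTop
      (nhds (∫ x in Set.Icc (0:ℝ) 1, (1 - (1 - x) ^ lam) / x ^ 2 ∂Λ)) := by
  have hpos : ∀ᵐ x ∂Λ.restrict (Icc 0 1), x ∈ Ioc (0 : ℝ) 1 := by
    filter_upwards [ae_restrict_mem measurableSet_Icc, measure_eq_zero_iff_ae_notMem.1
      (measure_singleton_zero_eq_zero_of_lintegral_inv_ne_top hint)] with x hx hx0
    exact ⟨hx.1.lt_of_ne (Ne.symm hx0), hx.2⟩
  simp_rw [← setIntegral_collisionIntegrand]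
  refine tendsto_integral_filter_of_dominated_convergence (fun x => max 1 lam * x⁻¹)
    (Eventually.of_forall fun n => Continuous.aestronglyMeasurable
      (by unfold collisionIntegrand; fun_prop)) ?_
    ((integrable_inv_of_lintegral_inv_ne_top hint).const_mul _) ?_
  · filter_upwards [eventually_ne_atTop 0] with n hn
    filter_upwards [hpos] with x hx
    exact abs_collisionIntegrand_le hlam hn ⟨x, Ioc_subset_Icc_self hx⟩ hx.1
  · filter_upwards [hpos] with x hx
    exact tendsto_collisionIntegrand hlam ⟨x, Ioc_subset_Icc_self hx⟩ hx.1.ne'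

theorem stmt17 (Λ : Measure ℝ) [IsFiniteMeasure Λ]
    (hsupp : Λ (Set.Icc (0:ℝ) 1)ᶜ = 0)
    (hint : ∫⁻ x in Set.Icc (0:ℝ) 1, (ENNReal.ofReal x)⁻¹ ∂Λ ≠ ⊤)
    (lam : ℝ) (hlam : 0 ≤ lam) :
    Tendsto (fun n : ℕ =>
        ∑ k ∈ Finset.Icc 1 (n-1), (n.choose (k-1) : ℝ) *
          (∫ x in Set.Icc (0:ℝ) 1, x ^ (n - k - 1) * (1 - x) ^ (k - 1) ∂Λ) *
          (1 - ((k : ℝ) / n) ^ lam))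
      atTop
      (nhds (∫ x in Set.Icc (0:ℝ) 1, (1 - (1 - x) ^ lam) / x ^ 2 ∂Λ)) :=
  stmt17_general Λ hint lam hlam
end

section
/- Assume Λ({0}) = 0 and that u ↦ ∫_{[u,1]} x^{-2} Λ(dx) is regularly varying at 0 with index -β for some β ∈ (0,1). Then the total coalescence rate g_n = ∫_{(0,1]} (1 - (1-x)^n - n x (1-x)^{n-1}) x^{-2} Λ(dx) satisfies g_n ~ Γ(2-β) ∫_{[1/n,1]} x^{-2} Λ(dx) as n → ∞. -/
/-!
Write `F u = ∫_{[u,1]} x⁻² Λ(dx)` and `n = m + 2`. The integrand of `g_n` is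
`P(Bin(n, x) ≥ 2) = ∫₀ˣ n (n-1) t (1-t)^(n-2) dt`, so by Tonelli
`g_n = ∫₀¹ n (n-1) t (1-t)^(n-2) F t dt`. Substituting `t = s / n` and dividing by `F (1/n)`,
the integrand tends to `s^(1-β) e^(-s)` by regular variation, and its integral is `Γ(2-β)`.

Dominated convergence takes the place of Karamata's Tauberian theorem. Fix `b ∈ [0, 2)` with
`β < b`. Regular variation at the ratio `1/2` gives `F (u/2) ≤ 2^b F u` near `0`; iterating it
yields the Potter bound `F (s u) ≤ 2^b s^(-b) F u` for `s ≤ 1`, and together with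
`(1 - s/n)^(n-2) ≤ e^(-s/2)` the integrands are dominated by `s e^(-s/2) (2^b s^(-b) + 1)`.
-/

open MeasureTheory Filter Set Real Topology
open scoped ENNReal

/-- `P(Bin(m + 2, x) ≥ 2)`. -/
def collisionProb (m : ℕ) (x : ℝ) : ℝ :=
  1 - (1 - x) ^ (m + 2) - (m + 2) * x * (1 - x) ^ (m + 1)

def collisionDensity (m : ℕ) (t : ℝ) : ℝ := (m + 2) * (m + 1) * t * (1 - t) ^ m

lemma hasDerivAt_collisionProb (m : ℕ) (x : ℝ) :
    HasDerivAt (collisionProb m) (collisionDensity m x) x := by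
  have h₁ : HasDerivAt (fun x : ℝ => 1 - x) (-1) x := by
    simpa using (hasDerivAt_id x).const_sub 1
  refine (((h₁.fun_pow (m + 2)).const_sub 1).fun_sub
    (((hasDerivAt_id' x).const_mul ((m : ℝ) + 2)).fun_mul (h₁.fun_pow (m + 1)))).congr_deriv ?_
  simp only [collisionDensity, Nat.add_sub_cancel]
  push_cast
  ring

lemma continuous_collisionDensity (m : ℕ) : Continuous (collisionDensity m) := by
  unfold collisionDensity; fun_prop

lemma collisionDensity_nonneg (m : ℕ) {t : ℝ} (ht : t ∈ Icc 0 1) : 0 ≤ collisionDensity m t := by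
  have : 0 ≤ 1 - t := sub_nonneg.2 ht.2
  have := ht.1
  unfold collisionDensity; positivity

lemma collisionProb_eq_integral (m : ℕ) (x : ℝ) :
    collisionProb m x = ∫ t in 0..x, collisionDensity m t := by
  rw [intervalIntegral.integral_eq_sub_of_hasDerivAt (fun t _ => hasDerivAt_collisionProb m t)
    ((continuous_collisionDensity m).intervalIntegrable 0 x)]
  simp [collisionProb]

lemma collisionProb_nonneg (m : ℕ) {x : ℝ} (hx : x ∈ Icc 0 1) : 0 ≤ collisionProb m x := by
  rw [collisionProb_eq_integral]
  exact intervalIntegral.integral_nonneg hx.1 fun t ht =>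
    collisionDensity_nonneg m ⟨ht.1, ht.2.trans hx.2⟩

lemma ofReal_collisionProb (m : ℕ) {x : ℝ} (hx : x ∈ Icc 0 1) :
    ENNReal.ofReal (collisionProb m x)
      = ∫⁻ t in Ioc 0 x, ENNReal.ofReal (collisionDensity m t) := by
  rw [collisionProb_eq_integral, intervalIntegral.integral_of_le hx.1]
  exact ofReal_integral_eq_lintegral_ofReal (continuous_collisionDensity m).integrableOn_Ioc
    ((ae_restrict_iff' measurableSet_Ioc).2 (ae_of_all _ fun t ht =>
      collisionDensity_nonneg m ⟨ht.1.le, ht.2.trans hx.2⟩))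

theorem lintegral_Ioc_lintegral_Ioc_mul {μ : Measure ℝ} [SFinite μ] {f g : ℝ → ℝ≥0∞}
    (hf : Measurable f) (hg : Measurable g) (a b : ℝ) :
    ∫⁻ x in Ioc a b, (∫⁻ t in Ioc a x, f t) * g x ∂μ
      = ∫⁻ t in Ioi a, f t * ∫⁻ x in Icc t b, g x ∂μ := by
  set S : Set (ℝ × ℝ) := {p | a < p.2 ∧ p.2 ≤ p.1 ∧ p.1 ≤ b}
  have hS : MeasurableSet S :=
    (measurableSet_lt measurable_const measurable_snd).inter
      ((measurableSet_le measurable_snd measurable_fst).inter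
        (measurableSet_le measurable_fst measurable_const))
  set K : ℝ × ℝ → ℝ≥0∞ := S.indicator fun p => f p.2 * g p.1
  have hK : Measurable K := ((hf.comp measurable_snd).mul (hg.comp measurable_fst)).indicator hS
  calc ∫⁻ x in Ioc a b, (∫⁻ t in Ioc a x, f t) * g x ∂μ
      = ∫⁻ x, ∫⁻ t, K (x, t) ∂volume ∂μ := by
        rw [← lintegral_indicator measurableSet_Ioc]
        congr 1 with x
        by_cases hx : x ∈ Ioc a b
        · rw [indicator_of_mem hx, ← lintegral_mul_const _ hf,
            ← lintegral_indicator measurableSet_Ioc]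
          congr 1 with t
          by_cases ht : t ∈ Ioc a x <;> simp_all [K, S]
        · rw [indicator_of_notMem hx, ← lintegral_zero]
          congr 1 with t
          simp only [K, S, indicator_apply, mem_ofPred_eq]
          grind
    _ = ∫⁻ t, ∫⁻ x, K (x, t) ∂μ ∂volume := lintegral_lintegral_swap hK.aemeasurable
    _ = _ := by
        rw [← lintegral_indicator measurableSet_Ioi]
        congr 1 with t
        by_cases ht : t ∈ Ioi a
        · rw [indicator_of_mem ht, ← lintegral_const_mul _ hg,
            ← lintegral_indicator measurableSet_Icc]
          congr 1 with x
          by_cases hx : x ∈ Icc t b <;> simp_all [K, S]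
        · rw [indicator_of_notMem ht, ← lintegral_zero]
          congr 1 with x
          simp only [K, S, indicator_apply, mem_ofPred_eq]
          grind

noncomputable def invSqTail (Λ : Measure ℝ) (u : ℝ) : ℝ := ∫ x in Icc u 1, (x ^ 2)⁻¹ ∂Λ

section invSqTail

variable (Λ : Measure ℝ)

lemma invSqTail_nonneg (u : ℝ) : 0 ≤ invSqTail Λ u :=
  integral_nonneg fun _ => by positivity

lemma invSqTail_eq_zero_of_one_lt {u : ℝ} (hu : 1 < u) : invSqTail Λ u = 0 := by
  simp [invSqTail, Icc_eq_empty_of_lt hu]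

lemma measurable_invSqTail : Measurable (invSqTail Λ) := by
  have hanti : Antitone fun u => ∫⁻ x in Icc u 1, ENNReal.ofReal (x ^ 2)⁻¹ ∂Λ :=
    fun _ _ huv => lintegral_mono_set (Icc_subset_Icc_left huv)
  convert hanti.measurable.ennreal_toReal with u
  -- this also holds where the integral diverges: both sides are then `0`
  exact integral_eq_lintegral_of_nonneg_ae (ae_of_all _ fun _ => by positivity) (by fun_prop)

variable [IsFiniteMeasureOnCompacts Λ]

lemma integrableOn_inv_sq_Icc {u : ℝ} (hu : 0 < u) :
    IntegrableOn (fun x : ℝ => (x ^ 2)⁻¹) (Icc u 1) Λ :=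
  ContinuousOn.integrableOn_compact isCompact_Icc fun _ hx =>
    ((continuousAt_id.pow 2).inv₀ (pow_ne_zero 2 (hu.trans_le hx.1).ne')).continuousWithinAt

lemma antitoneOn_invSqTail : AntitoneOn (invSqTail Λ) (Ioi 0) := fun _ hu _ _ huv =>
  setIntegral_mono_set (integrableOn_inv_sq_Icc Λ hu) (ae_of_all _ fun _ => by positivity)
    (Icc_subset_Icc_left huv).eventuallyLE

lemma ofReal_invSqTail {u : ℝ} (hu : 0 < u) :
    ENNReal.ofReal (invSqTail Λ u) = ∫⁻ x in Icc u 1, ENNReal.ofReal (x ^ 2)⁻¹ ∂Λ :=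
  ofReal_integral_eq_lintegral_ofReal (integrableOn_inv_sq_Icc Λ hu)
    (ae_of_all _ fun _ => by positivity)

end invSqTail

theorem integral_collisionProb_div_sq (Λ : Measure ℝ) [IsFiniteMeasureOnCompacts Λ] (m : ℕ) :
    ∫ x in Ioc 0 1, collisionProb m x / x ^ 2 ∂Λ
      = ∫ t in Ioi 0, collisionDensity m t * invSqTail Λ t := by
  have hD := (continuous_collisionDensity m).measurable
  have hP : Measurable (collisionProb m) := by unfold collisionProb; fun_prop
  have hlhs : 0 ≤ᵐ[Λ.restrict (Ioc 0 1)] fun x => collisionProb m x / x ^ 2 :=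
    (ae_restrict_iff' measurableSet_Ioc).2 (ae_of_all _ fun x hx =>
      div_nonneg (collisionProb_nonneg m ⟨hx.1.le, hx.2⟩) (sq_nonneg x))
  have hrhs : 0 ≤ᵐ[volume.restrict (Ioi 0)] fun t => collisionDensity m t * invSqTail Λ t := by
    refine (ae_restrict_iff' measurableSet_Ioi).2 (ae_of_all _ fun t ht => ?_)
    change 0 ≤ collisionDensity m t * invSqTail Λ t
    rcases le_or_gt t 1 with ht1 | ht1
    · exact mul_nonneg (collisionDensity_nonneg m ⟨le_of_lt ht, ht1⟩) (invSqTail_nonneg Λ t)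
    · rw [invSqTail_eq_zero_of_one_lt Λ ht1, mul_zero]
  rw [integral_eq_lintegral_of_nonneg_ae hlhs
    (hP.div (measurable_id.pow_const 2)).aestronglyMeasurable,
    integral_eq_lintegral_of_nonneg_ae hrhs
      (hD.mul (measurable_invSqTail Λ)).aestronglyMeasurable]
  congr 1
  calc ∫⁻ x in Ioc 0 1, ENNReal.ofReal (collisionProb m x / x ^ 2) ∂Λ
      = ∫⁻ x in Ioc 0 1, (∫⁻ t in Ioc 0 x, ENNReal.ofReal (collisionDensity m t))
          * ENNReal.ofReal (x ^ 2)⁻¹ ∂Λ := by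
        refine setLIntegral_congr_fun measurableSet_Ioc fun x hx => ?_
        rw [div_eq_mul_inv, ENNReal.ofReal_mul' (by positivity),
          ofReal_collisionProb m ⟨hx.1.le, hx.2⟩]
    _ = ∫⁻ t in Ioi 0, ENNReal.ofReal (collisionDensity m t)
          * ∫⁻ x in Icc t 1, ENNReal.ofReal (x ^ 2)⁻¹ ∂Λ :=
        lintegral_Ioc_lintegral_Ioc_mul hD.ennreal_ofReal (by fun_prop) 0 1
    _ = ∫⁻ t in Ioi 0, ENNReal.ofReal (collisionDensity m t * invSqTail Λ t) := by
        refine setLIntegral_congr_fun measurableSet_Ioi fun t ht => ?_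
        rw [ENNReal.ofReal_mul' (invSqTail_nonneg Λ t), ofReal_invSqTail Λ ht]

section RegularVariation

variable {F : ℝ → ℝ}

lemma exists_doubling_bound {β b : ℝ} (hβb : β < b) (hF_nonneg : 0 ≤ F)
    (hF_anti : AntitoneOn F (Ioi 0))
    (hF : Tendsto (fun u => F (2⁻¹ * u) / F u) (𝓝[>] 0) (𝓝 ((2⁻¹ : ℝ) ^ (-β)))) :
    ∃ u₁ > 0, ∀ u ∈ Ioc 0 u₁, 0 < F u ∧ F (2⁻¹ * u) ≤ 2 ^ b * F u := by
  have hlim : (2⁻¹ : ℝ) ^ (-β) = 2 ^ β := by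
    rw [inv_rpow zero_le_two, ← rpow_neg zero_le_two, neg_neg]
  rw [hlim] at hF
  have hev : ∀ᶠ u in 𝓝[>] 0, F (2⁻¹ * u) / F u ≠ 0 ∧ F (2⁻¹ * u) / F u < 2 ^ b :=
    (hF.eventually_ne (rpow_pos_of_pos two_pos β).ne').and
      (hF.eventually_lt_const (rpow_lt_rpow_of_exponent_lt one_lt_two hβb))
  obtain ⟨δ, hδ, hδev⟩ := mem_nhdsGT_iff_exists_Ioo_subset.1 hev
  have hδ₂ : δ / 2 ∈ Ioo 0 δ := ⟨half_pos hδ, half_lt_self hδ⟩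
  have hFδ : 0 < F (δ / 2) :=
    (hF_nonneg _).lt_of_ne' (div_ne_zero_iff.1 (hδev hδ₂).1).2
  refine ⟨δ / 2, hδ₂.1, fun u hu => ?_⟩
  have hFu : 0 < F u := hFδ.trans_le (hF_anti hu.1 hδ₂.1 hu.2)
  exact ⟨hFu, ((div_lt_iff₀ hFu).1 (hδev ⟨hu.1, hu.2.trans_lt hδ₂.2⟩).2).le⟩

lemma le_two_rpow_mul_rpow_of_doubling {b u₁ : ℝ} (hb : 0 ≤ b) (hF_anti : AntitoneOn F (Ioi 0))
    (hF_nonneg : ∀ u ∈ Ioc 0 u₁, 0 ≤ F u)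
    (hdouble : ∀ u ∈ Ioc 0 u₁, F (2⁻¹ * u) ≤ 2 ^ b * F u)
    {u s : ℝ} (hu : u ∈ Ioc 0 u₁) (hs : s ∈ Ioc 0 1) :
    F (s * u) ≤ 2 ^ b * s ^ (-b) * F u := by
  obtain ⟨j, hj⟩ := exists_pow_lt_of_lt_one hs.1 (by norm_num : (2⁻¹ : ℝ) < 1)
  induction j generalizing u s with
  | zero => exact absurd hs.2 (by simpa using hj)
  | succ j ih =>
    have hFu := hF_nonneg u hu
    rcases lt_or_ge 2⁻¹ s with hs2 | hs2
    · calc F (s * u) ≤ F (2⁻¹ * u) :=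
            hF_anti (by simp [hu.1]) (mul_pos hs.1 hu.1) (by nlinarith [hu.1])
        _ ≤ 2 ^ b * F u := hdouble u hu
        _ ≤ 2 ^ b * s ^ (-b) * F u := by
            have : 1 ≤ s ^ (-b) := one_le_rpow_of_pos_of_le_one_of_nonpos hs.1 hs.2 (by linarith)
            rw [mul_right_comm]
            exact le_mul_of_one_le_right (by positivity) this
    -- for `s ≤ 1/2`, apply the bound to `2 * s` at the point `u / 2`
    · have hu' : 2⁻¹ * u ∈ Ioc 0 u₁ := ⟨by simp [hu.1], by linarith [hu.1, hu.2]⟩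
      have hs' : 2 * s ∈ Ioc 0 1 := ⟨by linarith [hs.1], by linarith⟩
      have hj' : (2⁻¹ : ℝ) ^ j < 2 * s := by rw [pow_succ] at hj; linarith
      calc F (s * u) = F (2 * s * (2⁻¹ * u)) := by ring_nf
        _ ≤ 2 ^ b * (2 * s) ^ (-b) * F (2⁻¹ * u) := ih hu' hs' hj'
        _ ≤ 2 ^ b * (2 * s) ^ (-b) * (2 ^ b * F u) :=
            mul_le_mul_of_nonneg_left (hdouble u hu)
              (mul_nonneg (by positivity) (rpow_nonneg (by linarith [hs.1]) _))
        _ = 2 ^ b * s ^ (-b) * F u := by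
            rw [mul_rpow zero_le_two hs.1.le, rpow_neg zero_le_two]
            field_simp

lemma div_le_two_rpow_mul_rpow_add_one {b u₁ : ℝ} (hb : 0 ≤ b) (hF_anti : AntitoneOn F (Ioi 0))
    (hF_pos : ∀ u ∈ Ioc 0 u₁, 0 < F u) (hdouble : ∀ u ∈ Ioc 0 u₁, F (2⁻¹ * u) ≤ 2 ^ b * F u)
    {u s : ℝ} (hu : u ∈ Ioc 0 u₁) (hs : 0 < s) :
    F (s * u) / F u ≤ 2 ^ b * s ^ (-b) + 1 := by
  rw [div_le_iff₀ (hF_pos u hu)]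
  rcases le_or_gt s 1 with hs1 | hs1
  · have := le_two_rpow_mul_rpow_of_doubling hb hF_anti (fun v hv => (hF_pos v hv).le) hdouble
      hu ⟨hs, hs1⟩
    nlinarith [hF_pos u hu]
  · have : F (s * u) ≤ F u := hF_anti hu.1 (mul_pos hs hu.1) (by nlinarith [hu.1])
    have : 0 ≤ 2 ^ b * s ^ (-b) := by positivity
    nlinarith [hF_pos u hu]

end RegularVariation

lemma tendsto_one_sub_div_add_two_pow (s : ℝ) :
    Tendsto (fun m : ℕ => (1 - s / (m + 2)) ^ m) atTop (𝓝 (exp (-s))) := by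
  have hbase : Tendsto (fun m : ℕ => 1 - s / (m + 2)) atTop (𝓝 1) := by
    simpa using tendsto_const_nhds.sub (tendsto_const_nhds.div_atTop
      ((tendsto_natCast_atTop_atTop (R := ℝ)).atTop_add tendsto_const_nhds))
  have hshift : Tendsto (fun m : ℕ => (1 - s / (m + 2)) ^ (m + 2)) atTop (𝓝 (exp (-s))) := by
    refine ((tendsto_one_add_div_pow_exp (-s)).comp (tendsto_add_atTop_nat 2)).congr fun m => ?_
    simp only [Function.comp_apply]
    push_cast
    ring
  have := hshift.div (hbase.pow 2) (by norm_num)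
  rw [one_pow, div_one] at this
  refine this.congr' ((hbase.eventually_ne one_ne_zero).mono fun m hm => ?_)
  simp only [Pi.div_apply, pow_add, mul_div_cancel_right₀ _ (pow_ne_zero 2 hm)]

lemma integrableOn_mul_exp_mul_rpow_add_one {b : ℝ} (hb : b < 2) (c : ℝ) :
    IntegrableOn (fun s => s * exp (-(s / 2)) * (c * s ^ (-b) + 1)) (Ioi 0) := by
  have key : ∀ σ > (-1 : ℝ), IntegrableOn (fun s => s ^ σ * exp (-2⁻¹ * s ^ (1 : ℝ))) (Ioi 0) :=
    fun σ hσ => integrableOn_rpow_mul_exp_neg_mul_rpow hσ one_pos (by norm_num)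
  refine IntegrableOn.congr_fun
    (((key (1 - b) (by linarith)).const_mul c).add (key 1 (by norm_num))) (fun s hs => ?_)
    measurableSet_Ioi
  show c * (s ^ (1 - b) * exp (-2⁻¹ * s ^ (1 : ℝ))) + s ^ (1 : ℝ) * exp (-2⁻¹ * s ^ (1 : ℝ)) = _
  rw [rpow_sub hs, rpow_neg hs.le, rpow_one, show -(s / 2) = -2⁻¹ * s by ring]
  ring

/-- The integrand of `∫ collisionDensity m t * F t` after the substitution `t = s / (m + 2)`,
normalised by `F (1 / (m + 2))`. -/
noncomputable def rescaledIntegrand (F : ℝ → ℝ) (m : ℕ) (s : ℝ) : ℝ :=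
  (m + 1) / (m + 2) * s * (1 - s / (m + 2)) ^ m * (F (s / (m + 2)) / F (m + 2 : ℝ)⁻¹)

section Abelian

variable {F : ℝ → ℝ}

lemma integral_collisionDensity_mul_div_eq (m : ℕ) :
    (∫ t in Ioi 0, collisionDensity m t * F t) / F (m + 2 : ℝ)⁻¹
      = ∫ s in Ioi 0, rescaledIntegrand F m s := by
  have hn : (0 : ℝ) < m + 2 := by positivity
  have hsub := integral_comp_mul_left_Ioi (fun t => collisionDensity m t * F t) 0 (inv_pos.2 hn)
  rw [mul_zero, inv_inv, smul_eq_mul] at hsub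
  have hpt : ∀ s, rescaledIntegrand F m s = ((m + 2 : ℝ)⁻¹ / F (m + 2 : ℝ)⁻¹)
      * (collisionDensity m ((m + 2 : ℝ)⁻¹ * s) * F ((m + 2 : ℝ)⁻¹ * s)) := by
    intro s
    simp only [rescaledIntegrand, collisionDensity]
    rw [inv_mul_eq_div]
    field_simp
  simp_rw [hpt]
  rw [integral_const_mul, hsub]
  field_simp

lemma tendsto_rescaledIntegrand {β s : ℝ} (hs : 0 < s)
    (hF : Tendsto (fun u => F (s * u) / F u) (𝓝[>] 0) (𝓝 (s ^ (-β)))) :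
    Tendsto (fun m => rescaledIntegrand F m s) atTop (𝓝 (exp (-s) * s ^ (2 - β - 1))) := by
  have hn : Tendsto (fun m : ℕ => (m + 2 : ℝ)) atTop atTop :=
    tendsto_natCast_atTop_atTop.atTop_add tendsto_const_nhds
  have hfrac : Tendsto (fun m : ℕ => (m + 1 : ℝ) / (m + 2)) atTop (𝓝 1) := by
    have := tendsto_const_nhds (x := (1 : ℝ)) |>.sub hn.inv_tendsto_atTop
    rw [sub_zero] at this
    refine this.congr fun m => ?_
    simp only [Pi.inv_apply]
    field_simp
    ring
  have hratio : Tendsto (fun m : ℕ => F (s / (m + 2)) / F (m + 2 : ℝ)⁻¹) atTop (𝓝 (s ^ (-β))) := by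
    refine (hF.comp (tendsto_inv_atTop_nhdsGT_zero.comp hn)).congr fun m => ?_
    rw [Function.comp_apply, Function.comp_apply, div_eq_mul_inv s]
  have hlim := ((hfrac.mul_const s).mul (tendsto_one_sub_div_add_two_pow s)).mul hratio
  rwa [show exp (-s) * s ^ (2 - β - 1) = 1 * s * exp (-s) * s ^ (-β) by
    rw [show 2 - β - 1 = 1 + -β by ring, rpow_add hs, rpow_one]; ring]

lemma norm_rescaledIntegrand_le {b u₁ s : ℝ} {m : ℕ} (hb : 0 ≤ b) (hF_nonneg : 0 ≤ F)
    (hF_anti : AntitoneOn F (Ioi 0)) (hF_supp : ∀ u > 1, F u = 0)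
    (hF_pos : ∀ u ∈ Ioc 0 u₁, 0 < F u) (hdouble : ∀ u ∈ Ioc 0 u₁, F (2⁻¹ * u) ≤ 2 ^ b * F u)
    (hm : 2 ≤ m) (hmu : (m + 2 : ℝ)⁻¹ ≤ u₁) (hs : 0 < s) :
    ‖rescaledIntegrand F m s‖ ≤ s * exp (-(s / 2)) * (2 ^ b * s ^ (-b) + 1) := by
  have hn : (0 : ℝ) < m + 2 := by positivity
  have hbound : 0 ≤ s * exp (-(s / 2)) * (2 ^ b * s ^ (-b) + 1) := by positivity
  rcases lt_or_ge 1 (s / (m + 2)) with hsn | hsn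
  · simpa [rescaledIntegrand, hF_supp _ hsn] using hbound
  have hx : 0 ≤ 1 - s / (m + 2) := sub_nonneg.2 hsn
  have hfrac : (m + 1 : ℝ) / (m + 2) ≤ 1 := (div_le_one hn).2 (by linarith)
  have hpow : (1 - s / (m + 2)) ^ m ≤ exp (-(s / 2)) := calc
    (1 - s / (m + 2)) ^ m ≤ exp (-(s / (m + 2))) ^ m := pow_le_pow_left₀ hx (one_sub_le_exp_neg _) m
    _ = exp (-(m * (s / (m + 2)))) := by rw [← exp_nat_mul]; ring_nf
    _ ≤ exp (-(s / 2)) := by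
        gcongr
        rw [mul_div_assoc', div_le_div_iff₀ two_pos hn]
        have : (2 : ℝ) ≤ m := by exact_mod_cast hm
        nlinarith
  have hratio : F (s / (m + 2)) / F (m + 2 : ℝ)⁻¹ ≤ 2 ^ b * s ^ (-b) + 1 := by
    rw [div_eq_mul_inv s]
    exact div_le_two_rpow_mul_rpow_add_one hb hF_anti hF_pos hdouble ⟨inv_pos.2 hn, hmu⟩ hs
  have hratio_nonneg : 0 ≤ F (s / (m + 2)) / F (m + 2 : ℝ)⁻¹ :=
    div_nonneg (hF_nonneg _) (hF_nonneg _)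
  rw [rescaledIntegrand, Real.norm_eq_abs, abs_of_nonneg
    (mul_nonneg (mul_nonneg (by positivity) (pow_nonneg hx m)) hratio_nonneg)]
  calc (m + 1 : ℝ) / (m + 2) * s * (1 - s / (m + 2)) ^ m * (F (s / (m + 2)) / F (m + 2 : ℝ)⁻¹)
      ≤ 1 * s * exp (-(s / 2)) * (2 ^ b * s ^ (-b) + 1) := by
        gcongr
    _ = _ := by rw [one_mul]

theorem tendsto_integral_collisionDensity_mul_div {β : ℝ} (hβ : β < 2) (hF_meas : Measurable F)
    (hF_nonneg : 0 ≤ F) (hF_anti : AntitoneOn F (Ioi 0)) (hF_supp : ∀ u > 1, F u = 0)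
    (hreg : ∀ c > 0, Tendsto (fun u => F (c * u) / F u) (𝓝[>] 0) (𝓝 (c ^ (-β)))) :
    Tendsto (fun m : ℕ => (∫ t in Ioi 0, collisionDensity m t * F t) / F (m + 2 : ℝ)⁻¹) atTop
      (𝓝 (Gamma (2 - β))) := by
  obtain ⟨b, hβb, hb2⟩ := exists_between (max_lt hβ two_pos)
  obtain ⟨u₁, hu₁, hdouble⟩ := exists_doubling_bound ((le_max_left β 0).trans_lt hβb)
    hF_nonneg hF_anti (hreg 2⁻¹ (by norm_num))
  have hsmall : ∀ᶠ m : ℕ in atTop, (m + 2 : ℝ)⁻¹ ≤ u₁ :=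
    (tendsto_inv_atTop_zero.comp
      (tendsto_natCast_atTop_atTop.atTop_add tendsto_const_nhds)).eventually (ge_mem_nhds hu₁)
  simp_rw [integral_collisionDensity_mul_div_eq]
  rw [Gamma_eq_integral (by linarith)]
  refine tendsto_integral_filter_of_dominated_convergence _
    (Eventually.of_forall fun m => by unfold rescaledIntegrand; fun_prop) ?_
    (integrableOn_mul_exp_mul_rpow_add_one hb2 (2 ^ b))
    (ae_restrict_of_forall_mem measurableSet_Ioi fun s hs =>
      tendsto_rescaledIntegrand hs (hreg s hs))
  filter_upwards [eventually_ge_atTop 2, hsmall] with m hm hmu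
  exact ae_restrict_of_forall_mem measurableSet_Ioi fun s hs =>
    norm_rescaledIntegrand_le ((le_max_right β 0).trans hβb.le) hF_nonneg hF_anti hF_supp
      (fun u hu => (hdouble u hu).1) (fun u hu => (hdouble u hu).2) hm hmu hs

end Abelian

theorem stmt18_general (Λ : Measure ℝ) [IsFiniteMeasure Λ]
    (β : ℝ) (hβ1 : β < 1)
    (hreg : ∀ c > (0:ℝ), Tendsto
      (fun u : ℝ => (∫ x in Set.Icc (c * u) 1, (x ^ 2)⁻¹ ∂Λ)
        / (∫ x in Set.Icc u 1, (x ^ 2)⁻¹ ∂Λ))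
      (nhdsWithin 0 (Set.Ioi 0)) (nhds (c ^ (-β)))) :
    Tendsto (fun n : ℕ =>
        (∫ x in Set.Ioc (0:ℝ) 1, (1 - (1 - x) ^ n - (n : ℝ) * x * (1 - x) ^ (n - 1)) / x ^ 2 ∂Λ)
          / (Real.Gamma (2 - β) * ∫ x in Set.Icc ((n : ℝ)⁻¹) 1, (x ^ 2)⁻¹ ∂Λ))
      atTop (nhds 1) := by
  have hΓ : Gamma (2 - β) ≠ 0 := (Gamma_pos_of_pos (by linarith)).ne'
  have key := (tendsto_integral_collisionDensity_mul_div (F := invSqTail Λ) (by linarith)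
    (measurable_invSqTail Λ) (invSqTail_nonneg Λ) (antitoneOn_invSqTail Λ)
    (fun _ hu => invSqTail_eq_zero_of_one_lt Λ hu) hreg).div_const (Gamma (2 - β))
  rw [div_self hΓ] at key
  rw [← tendsto_add_atTop_iff_nat 2]
  refine key.congr fun m => ?_
  rw [← integral_collisionProb_div_sq, div_div, mul_comm]
  simp [collisionProb, invSqTail]

theorem stmt18 (Λ : Measure ℝ) [IsFiniteMeasure Λ]
    (hsupp : Λ (Set.Icc (0:ℝ) 1)ᶜ = 0) (h0 : Λ {0} = 0)
    (β : ℝ) (hβ : 0 < β) (hβ1 : β < 1)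
    (hreg : ∀ c > (0:ℝ), Tendsto
      (fun u : ℝ => (∫ x in Set.Icc (c * u) 1, (x ^ 2)⁻¹ ∂Λ)
        / (∫ x in Set.Icc u 1, (x ^ 2)⁻¹ ∂Λ))
      (nhdsWithin 0 (Set.Ioi 0)) (nhds (c ^ (-β)))) :
    Tendsto (fun n : ℕ =>
        (∫ x in Set.Ioc (0:ℝ) 1, (1 - (1 - x) ^ n - (n : ℝ) * x * (1 - x) ^ (n - 1)) / x ^ 2 ∂Λ)
          / (Real.Gamma (2 - β) * ∫ x in Set.Icc ((n : ℝ)⁻¹) 1, (x ^ 2)⁻¹ ∂Λ))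
      atTop (nhds 1) :=
  stmt18_general Λ β hβ1 hreg
end

section
/- Let ξ be a subordinator with Laplace exponent ψ (so E[e^{-λ ξ_t}] = e^{-t ψ(λ)}), let γ > 0, and set σ = ∫_0^∞ e^{-γ ξ_r} dr. Then for every positive integer p, E[σ^p] = p! / ∏_{i=1}^p ψ(γ i). -/
open MeasureTheory ProbabilityTheory
open scoped ENNReal

/-- `e^{-l·x}` for `x ∈ [0,∞]`, with the convention `e^{-l·∞} = 0` (killed subordinator). -/
noncomputable def killedExp (l : ℝ) (x : ℝ≥0∞) : ℝ :=
  if x = ⊤ then 0 else Real.exp (-l * x.toReal)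

/-!
For a path `z`, the power `(∫_{s>t} e^{-γ(z_s - z_t)} ds)^n` equals `n!` times the integral of
`e^{-γ ∑ₖ (z_{sₖ} - z_t)}` over the simplex `t < s₁ < ⋯ < sₙ`, and peeling off `s₁` gives the
recursion `J_{n+1}(t) = ∫_{s>t} e^{-γ(n+1)(z_s - z_t)} J_n(s) ds`. By induction on `n`,
`E[Y J_n(t)] = E[Y] ∏_{i≤n} ψ(γi)⁻¹` for every `Y` measurable with respect to the past up to `t`:
the inductive hypothesis at time `s` absorbs `J_n(s)`, the increment `ξ_s - ξ_t` is independent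
of the past with `E[e^{-γ(n+1)(ξ_s - ξ_t)}] = e^{-(s-t)ψ(γ(n+1))}`, and integrating over `s > t`
contributes `ψ(γ(n+1))⁻¹`. Fubini needs a jointly measurable process, so `ξ` is first replaced
by its right limits along the rationals, which agree with `ξ` almost surely.
-/

open Set Filter Topology

lemma killedExp_nonneg (l : ℝ) (x : ℝ≥0∞) : 0 ≤ killedExp l x := by
  unfold killedExp
  split_ifs
  exacts [le_rfl, (Real.exp_pos _).le]

lemma killedExp_le_one {l : ℝ} (hl : 0 ≤ l) (x : ℝ≥0∞) : killedExp l x ≤ 1 := by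
  unfold killedExp
  split_ifs
  · exact zero_le_one
  · exact Real.exp_le_one_iff.2 (by nlinarith [ENNReal.toReal_nonneg (a := x)])

@[fun_prop]
lemma measurable_killedExp (l : ℝ) : Measurable (killedExp l) :=
  Measurable.ite (measurableSet_singleton ⊤) measurable_const (by fun_prop)

noncomputable def ekilledExp (l : ℝ) (x : ℝ≥0∞) : ℝ≥0∞ := ENNReal.ofReal (killedExp l x)

@[fun_prop]
lemma measurable_ekilledExp (l : ℝ) : Measurable (ekilledExp l) :=
  ENNReal.measurable_ofReal.comp (measurable_killedExp l)

@[simp]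
lemma ekilledExp_top (l : ℝ) : ekilledExp l ⊤ = 0 := by simp [ekilledExp, killedExp]

@[simp]
lemma ekilledExp_zero (l : ℝ) : ekilledExp l 0 = 1 := by simp [ekilledExp, killedExp]

lemma integral_killedExp_eq_toReal {ν : Measure ℝ} {z : ℝ → ℝ≥0∞} (hz : Measurable z) (l : ℝ) :
    ∫ r, killedExp l (z r) ∂ν = (∫⁻ r, ekilledExp l (z r) ∂ν).toReal :=
  integral_eq_lintegral_of_nonneg_ae (ae_of_all _ fun _ => killedExp_nonneg _ _)
    ((measurable_killedExp l).comp hz).aestronglyMeasurable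

lemma ekilledExp_of_ne_top (l : ℝ) {x : ℝ≥0∞} (hx : x ≠ ⊤) :
    ekilledExp l x = ENNReal.ofReal (Real.exp (-l * x.toReal)) := by
  simp [ekilledExp, killedExp, hx]

lemma ekilledExp_pow (l : ℝ) (x : ℝ≥0∞) {n : ℕ} (hn : n ≠ 0) :
    ekilledExp l x ^ n = ekilledExp (l * n) x := by
  by_cases hx : x = ⊤
  · simp [hx, hn]
  · rw [ekilledExp_of_ne_top _ hx, ekilledExp_of_ne_top _ hx,
      ← ENNReal.ofReal_pow (Real.exp_pos _).le, ← Real.exp_nat_mul]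
    ring_nf

lemma ekilledExp_sub_mul_ekilledExp_sub (l : ℝ) {a b c : ℝ≥0∞} (hab : a ≤ b) (hbc : b ≤ c) :
    ekilledExp l (b - a) * ekilledExp l (c - b) = ekilledExp l (c - a) := by
  rcases eq_or_ne c ⊤ with rfl | hc
  · rcases eq_or_ne b ⊤ with rfl | hb
    · rcases eq_or_ne a ⊤ with rfl | ha <;> simp [*]
    · simp [ENNReal.top_sub hb, ENNReal.top_sub (hab.trans_lt hb.lt_top).ne]
  · have hb := (hbc.trans_lt hc.lt_top).ne
    have ha := (hab.trans_lt hb.lt_top).ne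
    rw [ekilledExp_of_ne_top _ (ENNReal.sub_ne_top hb), ekilledExp_of_ne_top _
      (ENNReal.sub_ne_top hc), ekilledExp_of_ne_top _ (ENNReal.sub_ne_top hc),
      ← ENNReal.ofReal_mul (Real.exp_pos _).le, ← Real.exp_add, ENNReal.toReal_sub_of_le hab hb,
      ENNReal.toReal_sub_of_le hbc hc, ENNReal.toReal_sub_of_le (hab.trans hbc) hc]
    ring_nf

lemma lintegral_Ioi_ofReal_exp_neg_mul {c : ℝ} (hc : 0 < c) (t : ℝ) :
    ∫⁻ s in Ioi t, ENNReal.ofReal (Real.exp (-(s - t) * c)) = ENNReal.ofReal c⁻¹ := by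
  have hexp : ∀ s, Real.exp (-(s - t) * c) = Real.exp (t * c) * Real.exp (-c * s) := fun s => by
    rw [← Real.exp_add]; ring_nf
  simp_rw [hexp]
  rw [← ofReal_integral_eq_lintegral_ofReal
    ((integrableOn_exp_mul_Ioi (neg_neg_of_pos hc) t).const_mul _)
    (ae_of_all _ fun s => by positivity), integral_const_mul,
    integral_exp_mul_Ioi (neg_neg_of_pos hc), neg_div_neg_eq, mul_div_assoc', ← Real.exp_add]
  simp [mul_comm]

lemma lintegral_Ioi_eq_lintegral_Ioo_add (f : ℝ → ℝ≥0∞) {a t : ℝ} (hat : a < t) :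
    ∫⁻ s in Ioi a, f s = (∫⁻ s in Ioo a t, f s) + ∫⁻ s in Ioi t, f s := by
  rw [← Ioo_union_Ici_eq_Ioi hat, lintegral_union measurableSet_Ici
    (disjoint_left.2 fun _ hx hx' => (not_lt.2 hx') hx.2), ← restrict_Ioi_eq_restrict_Ici]

lemma lintegral_Ioi_lintegral_Ioo_mul {f g : ℝ → ℝ≥0∞} (hf : Measurable f) (hg : Measurable g)
    (a : ℝ) :
    ∫⁻ t in Ioi a, (∫⁻ s in Ioo a t, f s) * g t = ∫⁻ s in Ioi a, f s * ∫⁻ t in Ioi s, g t := by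
  set K : ℝ × ℝ → ℝ≥0∞ := {q | q.1 < q.2}.indicator fun q => f q.1 * g q.2
  have hK : Measurable K :=
    (by fun_prop : Measurable fun q : ℝ × ℝ => f q.1 * g q.2).indicator
      (measurableSet_lt measurable_fst measurable_snd)
  have hleft (t : ℝ) : (∫⁻ s in Ioo a t, f s) * g t = ∫⁻ s in Ioi a, K (s, t) := by
    rw [← Iio_inter_Ioi, ← Measure.restrict_restrict measurableSet_Iio,
      ← lintegral_indicator measurableSet_Iio,
      ← lintegral_mul_const _ (hf.indicator measurableSet_Iio)]
    congr 1 with s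
    by_cases hs : s < t <;> simp [K, indicator, hs]
  have hright : ∀ s ∈ Ioi a, f s * ∫⁻ t in Ioi s, g t = ∫⁻ t in Ioi a, K (s, t) := fun s hs => by
    rw [← Measure.restrict_restrict_of_subset (Ioi_subset_Ioi (le_of_lt hs)),
      ← lintegral_indicator measurableSet_Ioi,
      ← lintegral_const_mul _ (hg.indicator measurableSet_Ioi)]
    congr 1 with t
    by_cases ht : s < t <;> simp [K, indicator, ht]
  simp_rw [hleft]
  rw [setLIntegral_congr_fun measurableSet_Ioi hright]
  exact lintegral_lintegral_swap (hK.comp measurable_swap).aemeasurable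

lemma measurable_setLIntegral_Ioi (f : ℝ → ℝ≥0∞) : Measurable fun t => ∫⁻ s in Ioi t, f s :=
  Antitone.measurable fun _ _ hab => lintegral_mono_set (Ioi_subset_Ioi hab)

lemma lintegral_Ioi_mul_tail_pow {f : ℝ → ℝ≥0∞} (hf : Measurable f) (n : ℕ) (a : ℝ) :
    (n + 1) * ∫⁻ t in Ioi a, f t * (∫⁻ s in Ioi t, f s) ^ n = (∫⁻ t in Ioi a, f t) ^ (n + 1) := by
  induction n generalizing a with
  | zero => simp
  | succ n ih =>
    set G : ℝ → ℝ≥0∞ := fun t => ∫⁻ s in Ioi t, f s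
    have hfG (m : ℕ) : Measurable fun t => f t * G t ^ m :=
      hf.mul ((measurable_setLIntegral_Ioi f).pow_const m)
    have htriangle : (n + 1) * ∫⁻ t in Ioi a, (∫⁻ s in Ioo a t, f s) * (f t * G t ^ n)
        = ∫⁻ t in Ioi a, f t * G t ^ (n + 1) := by
      rw [lintegral_Ioi_lintegral_Ioo_mul hf (hfG n), ← lintegral_const_mul' _ _ (by simp)]
      refine setLIntegral_congr_fun measurableSet_Ioi fun t _ => ?_
      rw [mul_left_comm, ih, pow_succ']
    symm
    calc G a ^ (n + 1 + 1) = (n + 1) * ∫⁻ t in Ioi a, G a * (f t * G t ^ n) := by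
          rw [pow_succ', ← ih, lintegral_const_mul _ (hfG n)]; ring
      _ = (n + 1) * (∫⁻ t in Ioi a, (∫⁻ s in Ioo a t, f s) * (f t * G t ^ n))
            + (n + 1) * ∫⁻ t in Ioi a, f t * G t ^ (n + 1) := by
          rw [← mul_add, ← lintegral_add_right _ (hfG _)]
          congr 1
          refine setLIntegral_congr_fun measurableSet_Ioi fun t ht => ?_
          rw [show G a = _ from lintegral_Ioi_eq_lintegral_Ioo_add f ht]
          ring
      _ = (↑(n + 1) + 1) * ∫⁻ t in Ioi a, f t * G t ^ (n + 1) := by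
          rw [htriangle]; push_cast; ring

/-- `orderedExpIntegral z γ n t = ∫_{t < s₁ < ⋯ < sₙ} exp (-γ ∑ₖ (z sₖ - z t))`. -/
noncomputable def orderedExpIntegral (z : ℝ → ℝ≥0∞) (γ : ℝ) : ℕ → ℝ → ℝ≥0∞
  | 0 => fun _ => 1
  | n + 1 => fun t =>
      ∫⁻ s in Ioi t, ekilledExp (γ * (n + 1)) (z s - z t) * orderedExpIntegral z γ n s

lemma measurable_orderedExpIntegral {Ω : Type*} [MeasurableSpace Ω] {Z : ℝ → Ω → ℝ≥0∞}
    (hZ : Measurable (Function.uncurry Z)) (γ : ℝ) (n : ℕ) :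
    Measurable fun p : ℝ × Ω => orderedExpIntegral (fun s => Z s p.2) γ n p.1 := by
  induction n with
  | zero => exact measurable_const
  | succ n ih =>
    simp_rw [orderedExpIntegral, ← lintegral_indicator measurableSet_Ioi]
    refine Measurable.lintegral_prod_right' (f := fun q : (ℝ × Ω) × ℝ => (Ioi q.1.1).indicator
      (fun s => ekilledExp (γ * (n + 1)) (Z s q.1.2 - Z q.1.1 q.1.2) *
        orderedExpIntegral (fun s => Z s q.1.2) γ n s) q.2) ?_
    simp_rw [indicator_apply, mem_Ioi]
    refine Measurable.ite (measurableSet_lt (by fun_prop) measurable_snd) ?_ measurable_const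
    have hZs : Measurable fun q : (ℝ × Ω) × ℝ => Z q.2 q.1.2 :=
      hZ.comp (f := fun q : (ℝ × Ω) × ℝ => (q.2, q.1.2)) (by fun_prop)
    have hZt : Measurable fun q : (ℝ × Ω) × ℝ => Z q.1.1 q.1.2 := hZ.comp measurable_fst
    exact ((measurable_ekilledExp _).comp (hZs.sub hZt)).mul
      (ih.comp (f := fun q : (ℝ × Ω) × ℝ => (q.2, q.1.2)) (by fun_prop))

lemma factorial_mul_orderedExpIntegral {z : ℝ → ℝ≥0∞} (hz : Measurable z) (γ : ℝ) (n : ℕ)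
    {t : ℝ} (hmono : MonotoneOn z (Ici t)) :
    n.factorial * orderedExpIntegral z γ n t = (∫⁻ s in Ioi t, ekilledExp γ (z s - z t)) ^ n := by
  induction n generalizing t with
  | zero => simp [orderedExpIntegral]
  | succ n ih =>
    set f : ℝ → ℝ≥0∞ := fun s => ekilledExp γ (z s - z t)
    have htail : ∀ s ∈ Ioi t, f s ^ (n + 1) * (∫⁻ u in Ioi s, ekilledExp γ (z u - z s)) ^ n
        = f s * (∫⁻ u in Ioi s, f u) ^ n := fun s hs => by
      rw [pow_succ', mul_assoc, ← mul_pow, ← lintegral_const_mul _ (by fun_prop)]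
      congr 2
      refine setLIntegral_congr_fun measurableSet_Ioi fun u hu => ?_
      have hts : t ≤ s := le_of_lt hs
      have hsu : s ≤ u := le_of_lt hu
      exact ekilledExp_sub_mul_ekilledExp_sub γ (hmono self_mem_Ici hts hts)
        (hmono hts (hts.trans hsu) hsu)
    calc ((n + 1).factorial : ℝ≥0∞) * orderedExpIntegral z γ (n + 1) t
        = (n + 1) * ∫⁻ s in Ioi t, f s ^ (n + 1) * (n.factorial * orderedExpIntegral z γ n s) := by
          rw [orderedExpIntegral, Nat.factorial_succ, Nat.cast_mul, mul_assoc,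
            ← lintegral_const_mul' _ _ (ENNReal.natCast_ne_top _)]
          push_cast
          congr 2 with s
          rw [ekilledExp_pow _ _ n.succ_ne_zero]
          push_cast
          ring
      _ = (n + 1) * ∫⁻ s in Ioi t, f s * (∫⁻ u in Ioi s, f u) ^ n := by
          congr 1
          refine setLIntegral_congr_fun measurableSet_Ioi fun s hs => ?_
          rw [ih (hmono.mono (Ici_subset_Ici.2 hs.le)), htail s hs]
      _ = (∫⁻ s in Ioi t, f s) ^ (n + 1) := by
          exact_mod_cast lintegral_Ioi_mul_tail_pow (by fun_prop) n t

lemma lintegral_mul_orderedExpIntegral_succ {Ω : Type*} [MeasurableSpace Ω] {μ : Measure Ω}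
    [SFinite μ] {Z : ℝ → Ω → ℝ≥0∞} (hZ : Measurable (Function.uncurry Z)) {Y : Ω → ℝ≥0∞}
    (hY : Measurable Y) (γ : ℝ) (n : ℕ) (t : ℝ) :
    ∫⁻ ω, Y ω * orderedExpIntegral (fun s => Z s ω) γ (n + 1) t ∂μ
      = ∫⁻ s in Ioi t, ∫⁻ ω, Y ω * ekilledExp (γ * (n + 1)) (Z s ω - Z t ω)
          * orderedExpIntegral (fun s => Z s ω) γ n s ∂μ := by
  have hJ := measurable_orderedExpIntegral hZ γ n
  have hF : Measurable fun q : Ω × ℝ => Y q.1 * ekilledExp (γ * (n + 1)) (Z q.2 q.1 - Z t q.1)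
      * orderedExpIntegral (fun s => Z s q.1) γ n q.2 :=
    ((hY.comp measurable_fst).mul ((measurable_ekilledExp _).comp
      ((hZ.comp measurable_swap).sub (hZ.comp (measurable_const.prodMk measurable_fst))))).mul
      (hJ.comp measurable_swap)
  rw [← lintegral_lintegral_swap hF.aemeasurable]
  congr 1 with ω
  rw [orderedExpIntegral, ← lintegral_const_mul _ ?_]
  · simp_rw [mul_assoc]
  · exact ((measurable_ekilledExp _).comp ((hZ.comp (measurable_id.prodMk measurable_const)).sub
      measurable_const)).mul (hJ.comp (measurable_id.prodMk measurable_const))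

/-- For nondecreasing `f` this is the right limit `f (t+)`; unlike `f t`, it is jointly measurable
in `t` and the path. -/
noncomputable def ratRightLim (f : ℝ → ℝ≥0∞) (t : ℝ) : ℝ≥0∞ :=
  ⨅ q : ℚ, if t < q then f q else ⊤

lemma measurable_ratRightLim {Ω : Type*} [MeasurableSpace Ω] {ξ : ℝ → Ω → ℝ≥0∞}
    (hξ : ∀ t, Measurable (ξ t)) : Measurable fun p : ℝ × Ω => ratRightLim (fun s => ξ s p.2) p.1 :=
  Measurable.iInf fun q => Measurable.ite (measurableSet_lt measurable_fst measurable_const)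
    ((hξ q).comp measurable_snd) measurable_const

lemma ratRightLim_eq {f : ℝ → ℝ≥0∞} {a t : ℝ} (hmono : MonotoneOn f (Ici a)) (ht : a ≤ t)
    (hcont : ContinuousWithinAt f (Ici t) t) : ratRightLim f t = f t := by
  refine le_antisymm (ge_of_tendsto (hcont.mono Ioi_subset_Ici_self) ?_)
    (le_iInf fun q => ?_)
  · filter_upwards [self_mem_nhdsWithin] with x (hx : t < x)
    obtain ⟨q, htq, hqx⟩ := exists_rat_btwn hx
    refine iInf_le_of_le q ?_
    rw [if_pos htq]
    exact hmono (ht.trans htq.le) (ht.trans hx.le) hqx.le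
  · split_ifs with htq
    exacts [hmono ht (ht.trans htq.le) htq.le, le_top]

lemma exists_measurable_uncurry_ae_eq {Ω : Type*} [MeasurableSpace Ω] {μ : Measure Ω}
    {ξ : ℝ → Ω → ℝ≥0∞} (hmeas : ∀ t, Measurable (ξ t))
    (hmono : ∀ᵐ ω ∂μ, MonotoneOn (fun s => ξ s ω) (Ici 0))
    (hcont : ∀ᵐ ω ∂μ, ∀ t, 0 ≤ t → ContinuousWithinAt (fun s => ξ s ω) (Ici t) t) :
    ∃ Z : ℝ → Ω → ℝ≥0∞, Measurable (Function.uncurry Z) ∧ ∀ᵐ ω ∂μ, ∀ t, 0 ≤ t → Z t ω = ξ t ω := by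
  refine ⟨fun t ω => ratRightLim (fun s => ξ s ω) t, measurable_ratRightLim hmeas, ?_⟩
  filter_upwards [hmono, hcont] with ω hmono hcont t ht
  exact ratRightLim_eq hmono ht (hcont t ht)

abbrev pastMeasurableSpace {Ω : Type*} (ξ : ℝ → Ω → ℝ≥0∞) (t : ℝ) : MeasurableSpace Ω :=
  ⨆ u ∈ Icc (0 : ℝ) t, MeasurableSpace.comap (ξ u) inferInstance

lemma measurable_pastMeasurableSpace {Ω : Type*} {ξ : ℝ → Ω → ℝ≥0∞} {u t : ℝ} (hu : 0 ≤ u)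
    (hut : u ≤ t) : Measurable[pastMeasurableSpace ξ t] (ξ u) :=
  measurable_iff_comap_le.2 <| le_iSup₂ (f := fun v (_ : v ∈ Icc (0 : ℝ) t) =>
    MeasurableSpace.comap (ξ v) inferInstance) u ⟨hu, hut⟩

lemma pastMeasurableSpace_mono {Ω : Type*} {ξ : ℝ → Ω → ℝ≥0∞} :
    Monotone (pastMeasurableSpace ξ) := fun _ _ hst =>
  iSup₂_le fun _ hu => measurable_iff_comap_le.1 <|
    measurable_pastMeasurableSpace hu.1 (hu.2.trans hst)

lemma prod_Icc_pos {ψ : ℝ → ℝ} (hψpos : ∀ l > (0 : ℝ), 0 < ψ l) {γ : ℝ} (hγ : 0 < γ) (n : ℕ) :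
    0 < ∏ i ∈ Finset.Icc 1 n, ψ (γ * i) :=
  Finset.prod_pos fun i hi => hψpos _ (mul_pos hγ (by exact_mod_cast (Finset.mem_Icc.1 hi).1))

section IndepIncrements

variable {Ω : Type*} [MeasurableSpace Ω] {μ : Measure Ω} {ξ : ℝ → Ω → ℝ≥0∞}

lemma pastMeasurableSpace_le (hmeas : ∀ t, Measurable (ξ t)) (t : ℝ) :
    pastMeasurableSpace ξ t ≤ ‹MeasurableSpace Ω› :=
  iSup₂_le fun u _ => measurable_iff_comap_le.1 (hmeas u)

lemma lintegral_ekilledExp_increment [IsFiniteMeasure μ] (hmeas : ∀ t, Measurable (ξ t))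
    (hstat : ∀ s t : ℝ, 0 ≤ s → 0 ≤ t →
      Measure.map (fun ω => ξ (s + t) ω - ξ s ω) μ = Measure.map (ξ t) μ)
    {ψ : ℝ → ℝ} (hlaplace : ∀ l t : ℝ, 0 ≤ l → 0 ≤ t →
      ∫ ω, killedExp l (ξ t ω) ∂μ = Real.exp (-t * ψ l))
    {l t s : ℝ} (hl : 0 ≤ l) (ht : 0 ≤ t) (hts : t ≤ s) :
    ∫⁻ ω, ekilledExp l (ξ s ω - ξ t ω) ∂μ = ENNReal.ofReal (Real.exp (-(s - t) * ψ l)) := by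
  have hmap := hstat t (s - t) ht (sub_nonneg.2 hts)
  rw [add_sub_cancel] at hmap
  have hint : Integrable (fun ω => killedExp l (ξ (s - t) ω)) μ :=
    (integrable_const (1 : ℝ)).mono'
      ((measurable_killedExp l).comp (hmeas _)).aestronglyMeasurable (ae_of_all _ fun ω => by
      rw [Real.norm_of_nonneg (killedExp_nonneg _ _)]; exact killedExp_le_one hl _)
  rw [← lintegral_map (g := fun ω => ξ s ω - ξ t ω) (measurable_ekilledExp l)
      ((hmeas s).sub (hmeas t)), hmap,
    lintegral_map (measurable_ekilledExp l) (hmeas _), ← hlaplace l _ hl (sub_nonneg.2 hts)]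
  exact (ofReal_integral_eq_lintegral_ofReal hint (ae_of_all _ fun _ => killedExp_nonneg _ _)).symm

lemma lintegral_mul_ekilledExp_increment [IsFiniteMeasure μ] (hmeas : ∀ t, Measurable (ξ t))
    (hindep : ∀ s t : ℝ, 0 ≤ s → 0 ≤ t →
      Indep (MeasurableSpace.comap (fun ω => ξ (s + t) ω - ξ s ω) inferInstance)
        (pastMeasurableSpace ξ s) μ)
    (hstat : ∀ s t : ℝ, 0 ≤ s → 0 ≤ t →
      Measure.map (fun ω => ξ (s + t) ω - ξ s ω) μ = Measure.map (ξ t) μ)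
    {ψ : ℝ → ℝ} (hlaplace : ∀ l t : ℝ, 0 ≤ l → 0 ≤ t →
      ∫ ω, killedExp l (ξ t ω) ∂μ = Real.exp (-t * ψ l))
    {l t s : ℝ} (hl : 0 ≤ l) (ht : 0 ≤ t) (hts : t ≤ s) {Y : Ω → ℝ≥0∞}
    (hY : Measurable[pastMeasurableSpace ξ t] Y) :
    ∫⁻ ω, Y ω * ekilledExp l (ξ s ω - ξ t ω) ∂μ
      = (∫⁻ ω, Y ω ∂μ) * ENNReal.ofReal (Real.exp (-(s - t) * ψ l)) := by
  have hind := hindep t (s - t) ht (sub_nonneg.2 hts)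
  rw [add_sub_cancel] at hind
  rw [← lintegral_ekilledExp_increment hmeas hstat hlaplace hl ht hts]
  exact lintegral_mul_eq_lintegral_mul_lintegral_of_independent_measurableSpace
    (pastMeasurableSpace_le hmeas t) (measurable_iff_comap_le.1 ((hmeas s).sub (hmeas t)))
    hind.symm hY ((measurable_ekilledExp l).comp (Measurable.of_comap_le le_rfl))

/-- `Y` need only agree a.e. with a past-measurable `Y₀`: the induction multiplies `Y` by a
functional of `Z`, which is a functional of the past of `ξ` only almost surely. -/
lemma lintegral_mul_orderedExpIntegral [IsFiniteMeasure μ] (hmeas : ∀ t, Measurable (ξ t))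
    (hindep : ∀ s t : ℝ, 0 ≤ s → 0 ≤ t →
      Indep (MeasurableSpace.comap (fun ω => ξ (s + t) ω - ξ s ω) inferInstance)
        (pastMeasurableSpace ξ s) μ)
    (hstat : ∀ s t : ℝ, 0 ≤ s → 0 ≤ t →
      Measure.map (fun ω => ξ (s + t) ω - ξ s ω) μ = Measure.map (ξ t) μ)
    {ψ : ℝ → ℝ} (hψpos : ∀ l > (0 : ℝ), 0 < ψ l) (hlaplace : ∀ l t : ℝ, 0 ≤ l → 0 ≤ t →
      ∫ ω, killedExp l (ξ t ω) ∂μ = Real.exp (-t * ψ l))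
    {Z : ℝ → Ω → ℝ≥0∞} (hZ : Measurable (Function.uncurry Z))
    (hZξ : ∀ᵐ ω ∂μ, ∀ t, 0 ≤ t → Z t ω = ξ t ω) {γ : ℝ} (hγ : 0 < γ) (n : ℕ) {t : ℝ}
    (ht : 0 ≤ t) {Y Y₀ : Ω → ℝ≥0∞} (hY : Measurable Y)
    (hY₀ : Measurable[pastMeasurableSpace ξ t] Y₀) (hYY₀ : Y =ᵐ[μ] Y₀) :
    ∫⁻ ω, Y ω * orderedExpIntegral (fun s => Z s ω) γ n t ∂μ
      = ENNReal.ofReal (∏ i ∈ Finset.Icc 1 n, ψ (γ * i))⁻¹ * ∫⁻ ω, Y ω ∂μ := by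
  induction n generalizing t Y Y₀ with
  | zero => simp [orderedExpIntegral]
  | succ n ih =>
    set l := γ * (n + 1)
    have hl : 0 < l := by positivity
    set c := ENNReal.ofReal (∏ i ∈ Finset.Icc 1 n, ψ (γ * i))⁻¹
    have hstep : ∀ s ∈ Ioi t, ∫⁻ ω, Y ω * ekilledExp l (Z s ω - Z t ω)
          * orderedExpIntegral (fun s => Z s ω) γ n s ∂μ
        = c * (∫⁻ ω, Y ω ∂μ) * ENNReal.ofReal (Real.exp (-(s - t) * ψ l)) := fun s hs => by
      have hts : t ≤ s := le_of_lt hs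
      have hYs : (fun ω => Y ω * ekilledExp l (Z s ω - Z t ω))
          =ᵐ[μ] fun ω => Y₀ ω * ekilledExp l (ξ s ω - ξ t ω) := by
        filter_upwards [hYY₀, hZξ] with ω hω hZω
        rw [hω, hZω s (ht.trans hts), hZω t ht]
      rw [ih (ht.trans hts) ?_ ?_ hYs, lintegral_congr_ae hYs,
        lintegral_mul_ekilledExp_increment hmeas hindep hstat hlaplace hl.le ht hts hY₀,
        lintegral_congr_ae hYY₀, mul_assoc]
      · exact hY.mul ((measurable_ekilledExp l).comp
          ((hZ.comp (measurable_const.prodMk measurable_id)).sub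
            (hZ.comp (measurable_const.prodMk measurable_id))))
      · exact (hY₀.mono (pastMeasurableSpace_mono hts) le_rfl).mul ((measurable_ekilledExp l).comp
          ((measurable_pastMeasurableSpace (ht.trans hts) le_rfl).sub
            (measurable_pastMeasurableSpace ht hts)))
    rw [lintegral_mul_orderedExpIntegral_succ hZ hY, setLIntegral_congr_fun measurableSet_Ioi hstep,
      lintegral_const_mul _ (by fun_prop), lintegral_Ioi_ofReal_exp_neg_mul (hψpos l hl),
      Finset.prod_Icc_succ_top (by omega), mul_inv,
      ENNReal.ofReal_mul (inv_nonneg.2 (prod_Icc_pos hψpos hγ n).le)]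
    push_cast
    ring

lemma lintegral_lintegral_ekilledExp_pow [IsProbabilityMeasure μ] (hmeas : ∀ t, Measurable (ξ t))
    (hindep : ∀ s t : ℝ, 0 ≤ s → 0 ≤ t →
      Indep (MeasurableSpace.comap (fun ω => ξ (s + t) ω - ξ s ω) inferInstance)
        (pastMeasurableSpace ξ s) μ)
    (hstat : ∀ s t : ℝ, 0 ≤ s → 0 ≤ t →
      Measure.map (fun ω => ξ (s + t) ω - ξ s ω) μ = Measure.map (ξ t) μ)
    {ψ : ℝ → ℝ} (hψpos : ∀ l > (0 : ℝ), 0 < ψ l) (hlaplace : ∀ l t : ℝ, 0 ≤ l → 0 ≤ t →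
      ∫ ω, killedExp l (ξ t ω) ∂μ = Real.exp (-t * ψ l))
    {Z : ℝ → Ω → ℝ≥0∞} (hZ : Measurable (Function.uncurry Z))
    (hZξ : ∀ᵐ ω ∂μ, ∀ t, 0 ≤ t → Z t ω = ξ t ω) (hξ0 : ∀ᵐ ω ∂μ, ξ 0 ω = 0)
    (hmono : ∀ᵐ ω ∂μ, MonotoneOn (fun s => ξ s ω) (Ici 0)) {γ : ℝ} (hγ : 0 < γ) (p : ℕ) :
    ∫⁻ ω, (∫⁻ r in Ioi 0, ekilledExp γ (Z r ω)) ^ p ∂μ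
      = p.factorial * ENNReal.ofReal (∏ i ∈ Finset.Icc 1 p, ψ (γ * i))⁻¹ := by
  have hpow : ∀ᵐ ω ∂μ, (∫⁻ r in Ioi 0, ekilledExp γ (Z r ω)) ^ p
      = p.factorial * orderedExpIntegral (fun s => Z s ω) γ p 0 := by
    filter_upwards [hZξ, hξ0, hmono] with ω hZω h0 hξω
    have hZmono : MonotoneOn (fun s => Z s ω) (Ici 0) := fun u hu v hv huv => by
      simpa only [hZω u hu, hZω v hv] using hξω hu hv huv
    rw [factorial_mul_orderedExpIntegral (z := fun s => Z s ω)
      (hZ.comp (measurable_id.prodMk measurable_const)) γ p hZmono, hZω 0 le_rfl, h0]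
    simp_rw [tsub_zero]
  rw [lintegral_congr_ae hpow, lintegral_const_mul' _ _ (ENNReal.natCast_ne_top _)]
  congr 1
  simpa using lintegral_mul_orderedExpIntegral hmeas hindep hstat hψpos hlaplace hZ hZξ hγ p
    le_rfl measurable_const (measurable_const (a := (1 : ℝ≥0∞))) (ae_eq_refl _)

end IndepIncrements

theorem stmt19_general {Ω : Type*} [MeasurableSpace Ω] (μ : Measure Ω) [IsProbabilityMeasure μ]
    (ξ : ℝ → Ω → ℝ≥0∞) (hmeas : ∀ t, Measurable (ξ t))
    -- ξ is a.s. a non-decreasing càdlàg path started at 0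
    (hpaths : ∀ᵐ ω ∂μ, ξ 0 ω = 0 ∧ (∀ s t : ℝ, 0 ≤ s → s ≤ t → ξ s ω ≤ ξ t ω)
      ∧ ∀ t : ℝ, 0 ≤ t → ContinuousWithinAt (fun s => ξ s ω) (Set.Ici t) t)
    -- increments are independent of the past
    (hindep : ∀ s t : ℝ, 0 ≤ s → 0 ≤ t →
      Indep (MeasurableSpace.comap (fun ω => ξ (s + t) ω - ξ s ω) inferInstance)
        (⨆ u ∈ Set.Icc (0:ℝ) s, MeasurableSpace.comap (ξ u) inferInstance) μ)
    -- increments are stationary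
    (hstat : ∀ s t : ℝ, 0 ≤ s → 0 ≤ t →
      Measure.map (fun ω => ξ (s + t) ω - ξ s ω) μ = Measure.map (ξ t) μ)
    -- ψ is the Laplace exponent of ξ
    (ψ : ℝ → ℝ) (hψpos : ∀ l > (0:ℝ), 0 < ψ l)
    (hlaplace : ∀ l t : ℝ, 0 ≤ l → 0 ≤ t →
      ∫ ω, killedExp l (ξ t ω) ∂μ = Real.exp (-t * ψ l))
    (γ : ℝ) (hγ : 0 < γ) (p : ℕ) :
    ∫ ω, (∫ r in Set.Ioi (0:ℝ), killedExp γ (ξ r ω)) ^ p ∂μ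
      = (p.factorial : ℝ) / ∏ i ∈ Finset.Icc 1 p, ψ (γ * i) := by
  have hmono : ∀ᵐ ω ∂μ, MonotoneOn (fun s => ξ s ω) (Ici 0) :=
    hpaths.mono fun _ h u hu _ _ huv => h.2.1 u _ hu huv
  obtain ⟨Z, hZ, hZξ⟩ := exists_measurable_uncurry_ae_eq hmeas hmono (hpaths.mono fun _ h => h.2.2)
  set L : Ω → ℝ≥0∞ := fun ω => ∫⁻ r in Ioi 0, ekilledExp γ (Z r ω)
  have hLmeas : Measurable L :=
    ((measurable_ekilledExp γ).comp (hZ.comp measurable_swap)).lintegral_prod_right'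
  have hmoment : ∫⁻ ω, L ω ^ p ∂μ
      = p.factorial * ENNReal.ofReal (∏ i ∈ Finset.Icc 1 p, ψ (γ * i))⁻¹ :=
    lintegral_lintegral_ekilledExp_pow hmeas hindep hstat hψpos hlaplace hZ hZξ
      (hpaths.mono fun _ h => h.1) hmono hγ p
  have hL : ∀ᵐ ω ∂μ, ∫ r in Ioi 0, killedExp γ (ξ r ω) = (L ω).toReal := by
    filter_upwards [hZξ] with ω hZω
    rw [setIntegral_congr_fun measurableSet_Ioi fun r hr => by rw [← hZω r (le_of_lt hr)]]
    exact integral_killedExp_eq_toReal (hZ.comp (measurable_id.prodMk measurable_const)) γ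
  calc ∫ ω, (∫ r in Ioi 0, killedExp γ (ξ r ω)) ^ p ∂μ = ∫ ω, (L ω ^ p).toReal ∂μ := by
        refine integral_congr_ae ?_
        filter_upwards [hL] with ω h
        rw [h, ENNReal.toReal_pow]
    _ = (∫⁻ ω, L ω ^ p ∂μ).toReal :=
        integral_toReal (hLmeas.pow_const p).aemeasurable <| ae_lt_top (hLmeas.pow_const p) <|
          hmoment ▸ ENNReal.mul_ne_top (ENNReal.natCast_ne_top _) ENNReal.ofReal_ne_top
    _ = (p.factorial : ℝ) / ∏ i ∈ Finset.Icc 1 p, ψ (γ * i) := by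
        rw [hmoment, ENNReal.toReal_mul, ENNReal.toReal_natCast,
          ENNReal.toReal_ofReal (inv_nonneg.2 (prod_Icc_pos hψpos hγ p).le), div_eq_mul_inv]

theorem stmt19 {Ω : Type*} [MeasurableSpace Ω] (μ : Measure Ω) [IsProbabilityMeasure μ]
    (ξ : ℝ → Ω → ℝ≥0∞) (hmeas : ∀ t, Measurable (ξ t))
    -- ξ is a.s. a non-decreasing càdlàg path started at 0
    (hpaths : ∀ᵐ ω ∂μ, ξ 0 ω = 0 ∧ (∀ s t : ℝ, 0 ≤ s → s ≤ t → ξ s ω ≤ ξ t ω)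
      ∧ ∀ t : ℝ, 0 ≤ t → ContinuousWithinAt (fun s => ξ s ω) (Set.Ici t) t)
    -- increments are independent of the past
    (hindep : ∀ s t : ℝ, 0 ≤ s → 0 ≤ t →
      Indep (MeasurableSpace.comap (fun ω => ξ (s + t) ω - ξ s ω) inferInstance)
        (⨆ u ∈ Set.Icc (0:ℝ) s, MeasurableSpace.comap (ξ u) inferInstance) μ)
    -- increments are stationary
    (hstat : ∀ s t : ℝ, 0 ≤ s → 0 ≤ t →
      Measure.map (fun ω => ξ (s + t) ω - ξ s ω) μ = Measure.map (ξ t) μ)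
    -- ψ is the Laplace exponent of ξ
    (ψ : ℝ → ℝ) (hψpos : ∀ l > (0:ℝ), 0 < ψ l)
    (hlaplace : ∀ l t : ℝ, 0 ≤ l → 0 ≤ t →
      ∫ ω, killedExp l (ξ t ω) ∂μ = Real.exp (-t * ψ l))
    (γ : ℝ) (hγ : 0 < γ) (p : ℕ) (hp : 1 ≤ p) :
    ∫ ω, (∫ r in Set.Ioi (0:ℝ), killedExp γ (ξ r ω)) ^ p ∂μ
      = (p.factorial : ℝ) / ∏ i ∈ Finset.Icc 1 p, ψ (γ * i) :=
  stmt19_general μ ξ hmeas hpaths hindep hstat ψ hψpos hlaplace γ hγ p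
end
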